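/- arXiv:2203.11863 — 7 statements merged into one kernel-verified Lean document; each statement's English description precedes it below -/
import Mathlib

section
/- If X is a real random variable with mean zero whose probability density function is bounded above by M > 0, then Var(X) ≥ 1/(12M²). -/
/-!
Let `μ` be the law of `X` and `m` its mean, so `Var(X) = ∫ (x - m)² dμ` and `μ ≤ M • volume`.
With `r = 1 / (2M)` and `I = [m - r, m + r]` one has pointwise
`r² ≤ (x - m)² + 𝟙_I(x) (r² - (x - m)²)`. Integrating against the probability measure `μ` and
bounding the second term through `μ ≤ M • volume` gives
`r² ≤ Var(X) + M · 4r³/3 = Var(X) + 2r²/3`, i.e. `Var(X) ≥ r²/3 = 1/(12M²)`.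
-/

open MeasureTheory ProbabilityTheory Set

lemma withDensity_ofReal_le_smul {α : Type*} [MeasurableSpace α] (μ : Measure α) {f : α → ℝ}
    {M : ℝ} (hf : ∀ a, f a ≤ M) :
    μ.withDensity (fun a => ENNReal.ofReal (f a)) ≤ ENNReal.ofReal M • μ :=
  calc μ.withDensity (fun a => ENNReal.ofReal (f a))
      ≤ μ.withDensity (fun _ => ENNReal.ofReal M) :=
        withDensity_mono (ae_of_all _ fun a => ENNReal.ofReal_le_ofReal (hf a))
    _ = ENNReal.ofReal M • μ := withDensity_const _

lemma sq_le_sq_sub_add_indicator_Icc {r : ℝ} (hr : 0 ≤ r) (c x : ℝ) :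
    r ^ 2 ≤ (x - c) ^ 2 + (Icc (c - r) (c + r)).indicator (fun y => r ^ 2 - (y - c) ^ 2) x := by
  by_cases hx : x ∈ Icc (c - r) (c + r)
  · simp [indicator_of_mem hx]
  · rw [indicator_of_notMem hx, add_zero]
    simp only [mem_Icc, not_and_or, not_le] at hx
    rcases hx with hx | hx <;> nlinarith

lemma integral_Icc_sq_sub_sq_sub {r : ℝ} (hr : 0 ≤ r) (c : ℝ) :
    ∫ x in Icc (c - r) (c + r), (r ^ 2 - (x - c) ^ 2) = 4 * r ^ 3 / 3 := by
  rw [integral_Icc_eq_integral_Ioc, ← intervalIntegral.integral_of_le (by linarith),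
    intervalIntegral.integral_comp_sub_right (fun x => r ^ 2 - x ^ 2)]
  simp only [sub_sub_cancel_left, add_sub_cancel_left, intervalIntegrable_const,
    intervalIntegral.intervalIntegrable_pow, intervalIntegral.integral_sub,
    intervalIntegral.integral_const, sub_neg_eq_add, smul_eq_mul, integral_pow]
  ring

theorem one_div_twelve_mul_sq_le_integral_sq_sub {μ : Measure ℝ} [IsProbabilityMeasure μ] {M : ℝ}
    (hM : 0 < M) (hμ : μ ≤ ENNReal.ofReal M • volume) (c : ℝ)
    (hint : Integrable (fun x => (x - c) ^ 2) μ) :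
    1 / (12 * M ^ 2) ≤ ∫ x, (x - c) ^ 2 ∂μ := by
  set r := 1 / (2 * M)
  have hr : 0 ≤ r := by positivity
  set φ := (Icc (c - r) (c + r)).indicator (fun y => r ^ 2 - (y - c) ^ 2)
  have hφ_nonneg : ∀ x, 0 ≤ φ x := indicator_nonneg fun y hy =>
    sub_nonneg.2 (sq_le_sq' (by linarith [hy.1]) (by linarith [hy.2]))
  have hφ_int : Integrable φ (ENNReal.ofReal M • volume) :=
    ((integrable_indicator_iff measurableSet_Icc).2
      (by fun_prop : Continuous fun y => r ^ 2 - (y - c) ^ 2).integrableOn_Icc).smul_measure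
      ENNReal.ofReal_ne_top
  have hφμ : ∫ x, φ x ∂μ ≤ M * (4 * r ^ 3 / 3) :=
    calc ∫ x, φ x ∂μ ≤ ∫ x, φ x ∂(ENNReal.ofReal M • volume) :=
          integral_mono_measure hμ (ae_of_all _ hφ_nonneg) hφ_int
      _ = M * (4 * r ^ 3 / 3) := by
          rw [integral_smul_measure, integral_indicator measurableSet_Icc,
            integral_Icc_sq_sub_sq_sub hr, ENNReal.toReal_ofReal hM.le, smul_eq_mul]
  have hsum : r ^ 2 ≤ ∫ x, (x - c) ^ 2 ∂μ + ∫ x, φ x ∂μ :=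
    calc r ^ 2 = ∫ _, r ^ 2 ∂μ := by simp
      _ ≤ ∫ x, ((x - c) ^ 2 + φ x) ∂μ :=
          integral_mono (integrable_const _) (hint.add (hφ_int.mono_measure hμ))
            (sq_le_sq_sub_add_indicator_Icc hr c)
      _ = ∫ x, (x - c) ^ 2 ∂μ + ∫ x, φ x ∂μ := integral_add hint (hφ_int.mono_measure hμ)
  have hr_eq : r ^ 2 - M * (4 * r ^ 3 / 3) = 1 / (12 * M ^ 2) := by
    simp only [r]; field_simp; ring
  linarith

theorem variance_lower_bound_of_bounded_density_general {Ω : Type*} [MeasurableSpace Ω]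
    (P : Measure Ω) [IsProbabilityMeasure P] (X : Ω → ℝ)
    (f : ℝ → ℝ)
    (hdens : P.map X = volume.withDensity (fun t => ENNReal.ofReal (f t)))
    (M : ℝ) (hM : 0 < M) (hbdd : ∀ t, f t ≤ M)
    (hL2 : MemLp X 2 P) :
    1 / (12 * M ^ 2) ≤ variance X P := by
  have hX : AEMeasurable X P := hL2.aestronglyMeasurable.aemeasurable
  have : IsProbabilityMeasure (P.map X) := Measure.isProbabilityMeasure_map hX
  have hsq : Measurable fun x : ℝ => (x - P[X]) ^ 2 := by fun_prop
  rw [variance_eq_integral hX, ← integral_map hX hsq.aestronglyMeasurable]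
  refine one_div_twelve_mul_sq_le_integral_sq_sub hM ?_ _ ?_
  · exact hdens ▸ withDensity_ofReal_le_smul volume hbdd
  · rw [integrable_map_measure hsq.aestronglyMeasurable hX]
    exact (hL2.sub (memLp_const _)).integrable_sq

/-- If a real random variable `X` has mean zero and a probability density function bounded
above by `M > 0`, then `Var(X) ≥ 1/(12 M²)`. -/
theorem variance_lower_bound_of_bounded_density {Ω : Type*} [MeasurableSpace Ω]
    (P : Measure Ω) [IsProbabilityMeasure P] (X : Ω → ℝ) (hX : Measurable X)
    (f : ℝ → ℝ) (hf : ∀ t, 0 ≤ f t)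
    (hdens : P.map X = volume.withDensity (fun t => ENNReal.ofReal (f t)))
    (M : ℝ) (hM : 0 < M) (hbdd : ∀ t, f t ≤ M)
    (hL2 : MemLp X 2 P) (hmean : ∫ ω, X ω ∂P = 0) :
    1 / (12 * M ^ 2) ≤ variance X P :=
  variance_lower_bound_of_bounded_density_general P X f hdens M hM hbdd hL2
end

section
/- Let X ∈ ℝ₊ be a nonnegative logconcave random variable with mean μ, and let λ < 1/μ. Then E[e^{λX}] ≤ 1/(1 - λμ). In particular, E[X²] ≤ 2μ². -/
/-! Compare the law of `X` with the exponential law of the same mean, whose density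
`g x = μ⁻¹ exp (-x / μ)` is log-affine. Since `log f` is concave, `{x > 0 | g x ≤ f x}` is an
interval, so on `(0, ∞)` the difference `g - f` is nonnegative, then nonpositive, then
nonnegative again; if it changes sign at most once, equality of the masses and of the means
forces `f = g` almost everywhere. For convex `φ`, the chord `ℓ` of `φ` through the two crossing
points makes `φ - ℓ` follow the same sign pattern, while `∫ ℓ (g - f) = 0` because `f` and `g`
share mass and mean; hence `∫ φ f ≤ ∫ φ g`. Take `φ x = exp (l x)` and `φ x = x²`. -/

open MeasureTheory

def LogConcaveFn (f : ℝ → ℝ) : Prop :=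
  ∀ x y t : ℝ, 0 ≤ t → t ≤ 1 → (f x) ^ t * (f y) ^ (1 - t) ≤ f (t * x + (1 - t) * y)

open Real Set

theorem LogConcaveFn.ordConnected_setOf_mul_exp_le {f : ℝ → ℝ} (hlc : LogConcaveFn f)
    {c : ℝ} (hc : 0 < c) (b : ℝ) : OrdConnected {x | c * exp (b * x) ≤ f x} := by
  refine Convex.ordConnected fun x hx y hy t s ht hs hts => ?_
  obtain rfl : s = 1 - t := by linarith
  have hinterp : c * exp (b * (t * x + (1 - t) * y)) =
      (c * exp (b * x)) ^ t * (c * exp (b * y)) ^ (1 - t) := by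
    rw [mul_rpow hc.le (exp_pos _).le, mul_rpow hc.le (exp_pos _).le, ← exp_mul, ← exp_mul,
      mul_mul_mul_comm, ← rpow_add hc, ← exp_add, add_sub_cancel, rpow_one]
    ring_nf
  calc c * exp (b * (t • x + (1 - t) • y))
      = (c * exp (b * x)) ^ t * (c * exp (b * y)) ^ (1 - t) := by simpa using hinterp
    _ ≤ f x ^ t * f y ^ (1 - t) :=
      mul_le_mul (rpow_le_rpow (by positivity) hx ht) (rpow_le_rpow (by positivity) hy hs)
        (by positivity) (rpow_nonneg ((by positivity : 0 ≤ c * exp (b * x)).trans hx) _)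
    _ ≤ f (t • x + (1 - t) • y) := hlc x y t ht (by linarith)

theorem LogConcaveFn.measurable {f : ℝ → ℝ} (hf : ∀ x, 0 ≤ f x) (hlc : LogConcaveFn f) :
    Measurable f := by
  refine measurable_of_Ioi fun c => ?_
  rcases lt_or_ge c 0 with hc | hc
  · simp [preimage, fun x => hc.trans_le (hf x)]
  refine OrdConnected.measurableSet ⟨fun x hx y hy z hz => ?_⟩
  have hm : 0 < min (f x) (f y) := lt_min (hc.trans_lt hx) (hc.trans_lt hy)
  have := (hlc.ordConnected_setOf_mul_exp_le hm 0).out (x := x) (y := y)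
    (by simp) (by simp) hz
  simp only [zero_mul, exp_zero, mul_one, mem_ofPred_eq] at this
  exact lt_of_lt_of_le (lt_min hx hy) this

theorem ConvexOn.sub_affine {s : Set ℝ} {φ : ℝ → ℝ} (hφ : ConvexOn ℝ s φ) (a b : ℝ) :
    ConvexOn ℝ s fun x => φ x - (a + b * x) := by
  refine ⟨hφ.1, fun x hx y hy u v hu hv huv => ?_⟩
  have := hφ.2 hx hy hu hv huv
  simp only [smul_eq_mul] at this ⊢
  linear_combination this + a * huv

theorem ConvexOn.mul_sub_mul_sub_nonneg_of_eq_zero {s : Set ℝ} {ψ : ℝ → ℝ}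
    (hψ : ConvexOn ℝ s ψ) {p q : ℝ} (hp : p ∈ s) (hq : q ∈ s) (hpq : p < q)
    (hψp : ψ p = 0) (hψq : ψ q = 0) {x : ℝ} (hx : x ∈ s) :
    0 ≤ ψ x * ((x - p) * (x - q)) := by
  rcases lt_or_ge x p with hxp | hpx
  · have : ψ p ≤ ψ x := hψ.le_left_of_right_le'' hx hq hxp.le hpq (by rw [hψp, hψq])
    exact mul_nonneg (hψp ▸ this) (mul_nonneg_of_nonpos_of_nonpos (by linarith) (by linarith))
  rcases le_or_gt x q with hxq | hqx
  · have : ψ x ≤ max (ψ p) (ψ q) :=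
      hψ.le_on_segment hp hq (by rw [segment_eq_Icc hpq.le]; exact ⟨hpx, hxq⟩)
    rw [hψp, hψq, max_self] at this
    exact mul_nonneg_of_nonpos_of_nonpos this
      (mul_nonpos_of_nonneg_of_nonpos (by linarith) (by linarith))
  · have : ψ q ≤ ψ x := hψ.le_right_of_left_le'' hp hx hpq hqx.le (by rw [hψp, hψq])
    exact mul_nonneg (hψq ▸ this) (mul_nonneg (by linarith) (by linarith))

theorem integrable_affine_mul {ν : Measure ℝ} {h : ℝ → ℝ} (hh : Integrable h ν)
    (hxh : Integrable (fun x => x * h x) ν) (a b : ℝ) :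
    Integrable (fun x => (a + b * x) * h x) ν := by
  simp only [add_mul, mul_assoc]
  exact (hh.const_mul a).add (hxh.const_mul b)

theorem integral_affine_mul_eq_zero {ν : Measure ℝ} {h : ℝ → ℝ} (hh : Integrable h ν)
    (hxh : Integrable (fun x => x * h x) ν) (h0 : ∫ x, h x ∂ν = 0)
    (h1 : ∫ x, x * h x ∂ν = 0) (a b : ℝ) :
    ∫ x, (a + b * x) * h x ∂ν = 0 := by
  simp only [add_mul, mul_assoc]
  rw [integral_add (hh.const_mul a) (hxh.const_mul b), integral_const_mul, integral_const_mul,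
    h0, h1, mul_zero, mul_zero, add_zero]

theorem integral_mul_nonneg_of_sub_affine_mul_nonneg {ν : Measure ℝ} {h φ : ℝ → ℝ}
    (hh : Integrable h ν) (hxh : Integrable (fun x => x * h x) ν) (h0 : ∫ x, h x ∂ν = 0)
    (h1 : ∫ x, x * h x ∂ν = 0) (hφh : Integrable (fun x => φ x * h x) ν) {a b : ℝ}
    (hsign : ∀ᵐ x ∂ν, 0 ≤ (φ x - (a + b * x)) * h x) :
    0 ≤ ∫ x, φ x * h x ∂ν := by
  have hsplit : ∫ x, (φ x - (a + b * x)) * h x ∂ν =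
      ∫ x, φ x * h x ∂ν - ∫ x, (a + b * x) * h x ∂ν := by
    simp only [sub_mul]
    exact integral_sub hφh (integrable_affine_mul hh hxh a b)
  have := integral_nonneg_of_ae hsign
  rwa [hsplit, integral_affine_mul_eq_zero hh hxh h0 h1, sub_zero] at this

theorem ae_eq_zero_of_affine_mul_nonneg {ν : Measure ℝ} [NullSingletonClass ν] {h : ℝ → ℝ}
    (hh : Integrable h ν) (hxh : Integrable (fun x => x * h x) ν) (h0 : ∫ x, h x ∂ν = 0)
    (h1 : ∫ x, x * h x ∂ν = 0) {a b : ℝ} (hb : b ≠ 0)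
    (hsign : ∀ᵐ x ∂ν, 0 ≤ (a + b * x) * h x) :
    h =ᵐ[ν] 0 := by
  have hzero : (fun x => (a + b * x) * h x) =ᵐ[ν] 0 :=
    (integral_eq_zero_iff_of_nonneg_ae hsign (integrable_affine_mul hh hxh a b)).1
      (integral_affine_mul_eq_zero hh hxh h0 h1 a b)
  filter_upwards [hzero, ν.ae_ne (-a / b)] with x hx hxne
  have hax : a + b * x ≠ 0 := fun hax => hxne (by field_simp; linarith)
  exact (mul_eq_zero.1 hx).resolve_left hax

/-- Either `g - f` changes sign at most once on `(0, ∞)`, or it is `≥ 0`, `≤ 0`, `≥ 0` on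
`(0, p)`, `(p, q)`, `(q, ∞)`. -/
theorem sign_pattern_of_ordConnected {f g : ℝ → ℝ}
    (hS : OrdConnected {x | 0 < x ∧ g x ≤ f x}) :
    (∃ a b : ℝ, b ≠ 0 ∧ ∀ᵐ x ∂volume.restrict (Ioi 0), 0 ≤ (a + b * x) * (g x - f x)) ∨
      ∃ p q : ℝ, 0 ≤ p ∧ p < q ∧ ∀ x, 0 < x → 0 ≤ (g x - f x) * ((x - p) * (x - q)) := by
  set S := {x | 0 < x ∧ g x ≤ f x}
  have hlt : ∀ x, 0 < x → x ∉ S → f x < g x :=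
    fun x hx hxS => lt_of_not_ge fun h => hxS ⟨hx, h⟩
  have hbelow : BddBelow S := ⟨0, fun x hx => hx.1.le⟩
  rcases S.subsingleton_or_nontrivial with hsub | hnt
  · refine Or.inl ⟨0, 1, one_ne_zero, ?_⟩
    have hnull : ∀ᵐ x, x ∉ S := measure_eq_zero_iff_ae_notMem.1 (hsub.measure_zero volume)
    filter_upwards [ae_restrict_of_ae hnull, ae_restrict_mem measurableSet_Ioi] with x hxS hx
    exact mul_nonneg (by simpa using hx.le) (sub_nonneg.2 (hlt x hx hxS).le)
  by_cases habove : BddAbove S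
  · obtain ⟨y, hy, z, hz, hyz⟩ := hnt.exists_lt
    have hp : 0 ≤ sInf S := le_csInf hnt.nonempty fun x hx => hx.1.le
    have hpq : sInf S < sSup S :=
      (csInf_le hbelow hy).trans_lt (hyz.trans_le (le_csSup habove hz))
    refine Or.inr ⟨sInf S, sSup S, hp, hpq, fun x hx => ?_⟩
    by_cases hxS : x ∈ S
    · exact mul_nonneg_of_nonpos_of_nonpos (sub_nonpos.2 hxS.2)
        (mul_nonpos_of_nonneg_of_nonpos (sub_nonneg.2 (csInf_le hbelow hxS))
          (sub_nonpos.2 (le_csSup habove hxS)))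
    · have hout : x ∉ Ioo (sInf S) (sSup S) := fun hin =>
        hxS ((IsConnected.Ioo_csInf_csSup_subset ⟨hnt.nonempty, hS.isPreconnected⟩
          hbelow habove) hin)
      rw [mem_Ioo, not_and_or, not_lt, not_lt] at hout
      refine mul_nonneg (sub_nonneg.2 (hlt x hx hxS).le) ?_
      rcases hout with h | h
      · exact mul_nonneg_of_nonpos_of_nonpos (by linarith) (by linarith)
      · exact mul_nonneg (by linarith) (by linarith)
  · refine Or.inl ⟨sInf S, -1, by norm_num, (ae_restrict_iff' measurableSet_Ioi).2
      (ae_of_all _ fun x hx => ?_)⟩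
    by_cases hxS : x ∈ S
    · exact mul_nonneg_of_nonpos_of_nonpos (by linarith [csInf_le hbelow hxS])
        (sub_nonpos.2 hxS.2)
    · have hxp : x ≤ sInf S :=
        not_lt.1 fun h => hxS (hS.isPreconnected.Ioi_csInf_subset hbelow habove h)
      exact mul_nonneg (by linarith) (sub_nonneg.2 (hlt x hx hxS).le)

theorem ConvexOn.setIntegral_mul_nonneg_of_sign_pattern {h φ : ℝ → ℝ}
    (hφ : ConvexOn ℝ (Ici 0) φ) (hh : IntegrableOn h (Ioi 0))
    (hxh : IntegrableOn (fun x => x * h x) (Ioi 0)) (h0 : ∫ x in Ioi 0, h x = 0)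
    (h1 : ∫ x in Ioi 0, x * h x = 0) (hφh : IntegrableOn (fun x => φ x * h x) (Ioi 0))
    {p q : ℝ} (hp : 0 ≤ p) (hpq : p < q) (hsign : ∀ x, 0 < x → 0 ≤ h x * ((x - p) * (x - q))) :
    0 ≤ ∫ x in Ioi 0, φ x * h x := by
  -- `x ↦ φ p - s * p + s * x` is the chord of `φ` over `[p, q]`
  set s := (φ q - φ p) / (q - p)
  have hψ := hφ.sub_affine (φ p - s * p) s
  have hψp : φ p - (φ p - s * p + s * p) = 0 := by ring
  have hψq : φ q - (φ p - s * p + s * q) = 0 := by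
    linear_combination -(div_mul_cancel₀ (φ q - φ p) (sub_ne_zero.2 hpq.ne'))
  refine integral_mul_nonneg_of_sub_affine_mul_nonneg hh hxh h0 h1 hφh (a := φ p - s * p) (b := s)
    ((ae_restrict_iff' measurableSet_Ioi).2 (ae_of_all _ fun x hx => ?_))
  have hφx := hψ.mul_sub_mul_sub_nonneg_of_eq_zero hp (hp.trans hpq.le : 0 ≤ q) hpq hψp hψq
    (Ioi_subset_Ici_self hx)
  rcases eq_or_ne ((x - p) * (x - q)) 0 with hc | hc
  · rcases mul_eq_zero.1 hc with hxp | hxq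
    · rw [sub_eq_zero.1 hxp, hψp, zero_mul]
    · rw [sub_eq_zero.1 hxq, hψq, zero_mul]
  · have := mul_nonneg hφx (hsign x hx)
    have hc2 : 0 < ((x - p) * (x - q)) ^ 2 := by positivity
    nlinarith

theorem setIntegral_mul_le_of_ordConnected {f g φ : ℝ → ℝ}
    (hS : OrdConnected {x | 0 < x ∧ g x ≤ f x}) (hg0 : ∀ x ∈ Ioi (0 : ℝ), 0 ≤ g x)
    (hf : IntegrableOn f (Ioi 0)) (hg : IntegrableOn g (Ioi 0))
    (hxf : IntegrableOn (fun x => x * f x) (Ioi 0))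
    (hxg : IntegrableOn (fun x => x * g x) (Ioi 0))
    (hmass : ∫ x in Ioi 0, f x = ∫ x in Ioi 0, g x)
    (hmean : ∫ x in Ioi 0, x * f x = ∫ x in Ioi 0, x * g x)
    (hφ : ConvexOn ℝ (Ici 0) φ) (hφ0 : ∀ x ∈ Ioi (0 : ℝ), 0 ≤ φ x)
    (hφg : IntegrableOn (fun x => φ x * g x) (Ioi 0)) :
    ∫ x in Ioi 0, φ x * f x ≤ ∫ x in Ioi 0, φ x * g x := by
  by_cases hφf : IntegrableOn (fun x => φ x * f x) (Ioi 0)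
  swap
  · rw [integral_undef hφf]
    exact setIntegral_nonneg measurableSet_Ioi fun x hx => mul_nonneg (hφ0 x hx) (hg0 x hx)
  have hh : IntegrableOn (fun x => g x - f x) (Ioi 0) := hg.sub hf
  have hxh : IntegrableOn (fun x => x * (g x - f x)) (Ioi 0) := by
    simp only [mul_sub]; exact hxg.sub hxf
  have h0 : ∫ x in Ioi 0, (g x - f x) = 0 := by rw [integral_sub hg hf, hmass, sub_self]
  have h1 : ∫ x in Ioi 0, x * (g x - f x) = 0 := by
    simp only [mul_sub]; rw [integral_sub hxg hxf, hmean, sub_self]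
  have hφh : ∫ x in Ioi 0, φ x * (g x - f x) =
      (∫ x in Ioi 0, φ x * g x) - ∫ x in Ioi 0, φ x * f x := by
    simp only [mul_sub]; exact integral_sub hφg hφf
  rcases sign_pattern_of_ordConnected hS with ⟨a, b, hb, hsign⟩ | ⟨p, q, hp, hpq, hsign⟩
  · have hfg := ae_eq_zero_of_affine_mul_nonneg hh hxh h0 h1 hb hsign
    refine (integral_congr_ae ?_).le
    filter_upwards [hfg] with x hx
    rw [show f x = g x by simpa [sub_eq_zero, eq_comm] using hx]
  have := hφ.setIntegral_mul_nonneg_of_sign_pattern hh hxh h0 h1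
    (by simp only [mul_sub]; exact hφg.sub hφf) hp hpq hsign
  linarith

theorem integral_comp_eq_setIntegral_Ioi_mul_density {Ω : Type*} [MeasurableSpace Ω]
    {ℙ : Measure Ω} {X : Ω → ℝ} (hX : Measurable X) (hpos : ∀ᵐ ω ∂ℙ, 0 ≤ X ω)
    {f : ℝ → ℝ} (hfm : Measurable f) (hf : ∀ x, 0 ≤ f x)
    (hdens : ℙ.map X = volume.withDensity (fun t => ENNReal.ofReal (f t)))
    {ψ : ℝ → ℝ} (hψ : Measurable ψ) :
    ∫ ω, ψ (X ω) ∂ℙ = ∫ x in Ioi 0, ψ x * f x := by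
  have hsupp : (ℙ.map X).restrict (Ici 0) = ℙ.map X :=
    Measure.restrict_eq_self_of_ae_mem ((ae_map_iff hX.aemeasurable measurableSet_Ici).2 hpos)
  rw [← integral_map hX.aemeasurable hψ.aestronglyMeasurable, ← hsupp, hdens,
    restrict_withDensity measurableSet_Ici, integral_withDensity_eq_integral_toReal_smul
      hfm.ennreal_ofReal (ae_of_all _ fun _ => ENNReal.ofReal_lt_top),
    integral_Ici_eq_integral_Ioi]
  simp only [ENNReal.toReal_ofReal (hf _), smul_eq_mul, mul_comm]

theorem integral_pow_mul_exp_neg_mul_Ioi (n : ℕ) {r : ℝ} (hr : 0 < r) :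
    ∫ x in Ioi 0, x ^ n * exp (-(r * x)) = n.factorial / r ^ (n + 1) := by
  have := integral_rpow_mul_exp_neg_mul_Ioi (a := n + 1) (by positivity) hr
  rw [add_sub_cancel_right, Gamma_nat_eq_factorial, ← Nat.cast_add_one, rpow_natCast,
    one_div, inv_pow] at this
  simp only [rpow_natCast] at this
  rw [this, div_eq_inv_mul]

theorem integral_pow_mul_exponential_density (n : ℕ) {μ : ℝ} (hμ : 0 < μ) :
    ∫ x in Ioi 0, x ^ n * (μ⁻¹ * exp (-(μ⁻¹ * x))) = n.factorial * μ ^ n := by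
  simp only [mul_left_comm _ μ⁻¹]
  rw [integral_const_mul, integral_pow_mul_exp_neg_mul_Ioi n (inv_pos.2 hμ), inv_pow,
    div_inv_eq_mul, pow_succ]
  field_simp

theorem integral_exp_mul_mul_exponential_density {μ l : ℝ} (hμ : 0 < μ) (hl : l < 1 / μ) :
    ∫ x in Ioi 0, exp (l * x) * (μ⁻¹ * exp (-(μ⁻¹ * x))) = 1 / (1 - l * μ) := by
  have hr : 0 < μ⁻¹ - l := by rwa [one_div, ← sub_pos] at hl
  have hint := integral_pow_mul_exp_neg_mul_Ioi 0 hr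
  have hlμ : 1 - l * μ = (μ⁻¹ - l) * μ := by field_simp
  simp only [pow_zero, one_mul, Nat.factorial_zero, Nat.cast_one, zero_add, pow_one] at hint
  calc ∫ x in Ioi 0, exp (l * x) * (μ⁻¹ * exp (-(μ⁻¹ * x)))
      = μ⁻¹ * ∫ x in Ioi 0, exp (-((μ⁻¹ - l) * x)) := by
        rw [← integral_const_mul]
        congr 1 with x
        rw [mul_left_comm, ← exp_add]
        ring_nf
    _ = 1 / (1 - l * μ) := by rw [hint, hlμ]; field_simp

theorem integral_convex_comp_le_exponential {Ω : Type*} [MeasurableSpace Ω] {ℙ : Measure Ω}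
    [IsProbabilityMeasure ℙ] {X : Ω → ℝ} (hX : Measurable X) (hpos : ∀ᵐ ω ∂ℙ, 0 ≤ X ω)
    {f : ℝ → ℝ} (hf : ∀ t, 0 ≤ f t) (hlc : LogConcaveFn f)
    (hdens : ℙ.map X = volume.withDensity (fun t => ENNReal.ofReal (f t)))
    {μ : ℝ} (hμ : 0 < μ) (hmean : ∫ ω, X ω ∂ℙ = μ)
    {φ : ℝ → ℝ} (hφ : ConvexOn ℝ (Ici 0) φ) (hφ0 : ∀ x ∈ Ioi (0 : ℝ), 0 ≤ φ x)
    (hφm : Measurable φ)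
    (hφg : IntegrableOn (fun x => φ x * (μ⁻¹ * exp (-(μ⁻¹ * x)))) (Ioi 0)) :
    ∫ ω, φ (X ω) ∂ℙ ≤ ∫ x in Ioi 0, φ x * (μ⁻¹ * exp (-(μ⁻¹ * x))) := by
  have hdensity {ψ : ℝ → ℝ} (hψ : Measurable ψ) :=
    integral_comp_eq_setIntegral_Ioi_mul_density hX hpos (hlc.measurable hf) hf hdens hψ
  have hmass : ∫ x in Ioi 0, f x = 1 := by
    simpa using (hdensity (measurable_const (a := (1 : ℝ)))).symm
  have hmean' : ∫ x in Ioi 0, x * f x = μ := (hdensity measurable_id).symm.trans hmean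
  have hgmass : ∫ x in Ioi 0, μ⁻¹ * exp (-(μ⁻¹ * x)) = 1 := by
    simpa using integral_pow_mul_exponential_density 0 hμ
  have hgmean : ∫ x in Ioi 0, x * (μ⁻¹ * exp (-(μ⁻¹ * x))) = μ := by
    simpa using integral_pow_mul_exponential_density 1 hμ
  have hS : OrdConnected {x | μ⁻¹ * exp (-(μ⁻¹ * x)) ≤ f x} := by
    simpa using hlc.ordConnected_setOf_mul_exp_le (inv_pos.2 hμ) (-μ⁻¹)
  rw [hdensity hφm]
  exact setIntegral_mul_le_of_ordConnected (ordConnected_Ioi.inter hS) (fun _ _ => by positivity)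
    (.of_integral_ne_zero (by simp [hmass])) (.of_integral_ne_zero (by simp [hgmass]))
    (.of_integral_ne_zero (by simp [hmean', hμ.ne']))
    (.of_integral_ne_zero (by simp [hgmean, hμ.ne']))
    (hmass.trans hgmass.symm) (hmean'.trans hgmean.symm) hφ hφ0 hφg

/-- If `X ≥ 0` is a nonnegative logconcave random variable with mean `μ > 0`, then for any
`λ < 1/μ` we have `E[exp (λ X)] ≤ 1 / (1 - λ μ)`; in particular `E[X²] ≤ 2 μ²`. -/
theorem nonneg_logconcave_mgf_bound {Ω : Type*} [MeasurableSpace Ω] (ℙ : Measure Ω)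
    [IsProbabilityMeasure ℙ] (X : Ω → ℝ) (hX : Measurable X)
    (hpos : ∀ᵐ ω ∂ℙ, 0 ≤ X ω)
    (f : ℝ → ℝ) (hf : ∀ t, 0 ≤ f t) (hlc : LogConcaveFn f)
    (hdens : ℙ.map X = volume.withDensity (fun t => ENNReal.ofReal (f t)))
    (μ : ℝ) (hμ : 0 < μ) (hmean : ∫ ω, X ω ∂ℙ = μ) :
    (∀ l : ℝ, l < 1 / μ → ∫ ω, Real.exp (l * X ω) ∂ℙ ≤ 1 / (1 - l * μ)) ∧
      ∫ ω, (X ω) ^ 2 ∂ℙ ≤ 2 * μ ^ 2 := by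
  have hcompare {φ : ℝ → ℝ} (hφ : ConvexOn ℝ (Ici 0) φ) (hφ0 : ∀ x ∈ Ioi (0 : ℝ), 0 ≤ φ x)
      (hφm : Measurable φ) {c : ℝ} (hc : 0 < c)
      (hφg : ∫ x in Ioi 0, φ x * (μ⁻¹ * exp (-(μ⁻¹ * x))) = c) :
      ∫ ω, φ (X ω) ∂ℙ ≤ c :=
    hφg ▸ integral_convex_comp_le_exponential hX hpos hf hlc hdens hμ hmean hφ hφ0 hφm
      (.of_integral_ne_zero (hφg ▸ hc.ne'))
  refine ⟨fun l hl => ?_, ?_⟩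
  · exact hcompare (φ := fun x => exp (l * x))
      ((convexOn_exp.comp_linearMap (l • LinearMap.id)).subset (subset_univ _) (convex_Ici 0))
      (fun _ _ => (exp_pos _).le) (by fun_prop) (one_div_pos.2 (sub_pos.2 ((lt_div_iff₀ hμ).1 hl)))
      (integral_exp_mul_mul_exponential_density hμ hl)
  · exact hcompare (even_two.convexOn_pow.subset (subset_univ _) (convex_Ici 0))
      (fun x _ => sq_nonneg x) (by fun_prop) (by positivity)
      (by simpa using integral_pow_mul_exponential_density 2 hμ)
end

section
/- Let X_1,...,X_n be independent nonnegative logconcave random variables each with mean μ. Then for ε > 0, Pr[∑ X_i ≥ (1+ε)μn] ≤ exp(−n(ε − ln(1+ε))). -/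
/-!
By Markov's inequality applied to `exp (t * ∑ Xᵢ)` and independence, it suffices to bound each
moment generating function by `E[exp (t X)] ≤ 1 / (1 - t μ)` for `t μ < 1`; choosing
`t = ε / ((1 + ε) μ)` gives the stated rate.

The right-hand side is the moment generating function of the exponential density `g` with mean `μ`,
and the bound holds because a logconcave density `f` on `[0, ∞)` with mean `μ` is dominated by `g`
in the convex order. Since `log f - log g` is concave on `[0, ∞)`, the set `J = {g ≤ f}` is an
interval and `f - g` is nonpositive off `J`. If `J` is a ray, `f - g` changes sign once and equal
mass and mean force `f = g`. Otherwise, for convex `φ` with chord `ℓ` over `J`, `φ - ℓ` and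
`f - g` have opposite signs everywhere, while `∫ ℓ (f - g) = 0`; hence `∫ φ f ≤ ∫ φ g`.
-/

open MeasureTheory ProbabilityTheory

open Real Set Filter

namespace LogConcaveFn

variable {f : ℝ → ℝ}

theorem ordConnected_setOf_mul_exp_le_s6 (hf : LogConcaveFn f) {C : ℝ} (hC : 0 < C) (k : ℝ) :
    {x | C * exp (k * x) ≤ f x}.OrdConnected := by
  refine ⟨fun x hx z hz y hy => ?_⟩
  rw [← segment_eq_Icc (hy.1.trans hy.2)] at hy
  obtain ⟨s, t, hs, ht, hst, rfl⟩ := hy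
  obtain rfl : t = 1 - s := by linarith
  have hfx : 0 < f x := (by positivity : 0 < C * exp (k * x)).trans_le hx
  calc C * exp (k * (s • x + (1 - s) • z))
      = (C * exp (k * x)) ^ s * (C * exp (k * z)) ^ (1 - s) := by
        rw [mul_rpow hC.le (exp_pos _).le, mul_rpow hC.le (exp_pos _).le, mul_mul_mul_comm,
          ← rpow_add hC, add_sub_cancel, rpow_one, ← exp_mul, ← exp_mul, ← exp_add, smul_eq_mul,
          smul_eq_mul]
        ring_nf
    _ ≤ f x ^ s * f z ^ (1 - s) := by gcongr <;> assumption
    _ ≤ f (s • x + (1 - s) • z) := hf x z s hs (by linarith)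

theorem measurable_s6 (hf0 : ∀ x, 0 ≤ f x) (hf : LogConcaveFn f) : Measurable f := by
  refine measurable_of_Ioi fun c => OrdConnected.measurableSet ⟨fun x hx z hz y hy => ?_⟩
  have hc : c < min (f x) (f z) := lt_min hx hz
  rcases lt_or_ge 0 (min (f x) (f z)) with hq | hq
  · have hlevel := hf.ordConnected_setOf_mul_exp_le_s6 hq 0
    simp only [zero_mul, exp_zero, mul_one] at hlevel
    exact hc.trans_le (hlevel.out (min_le_left (f x) (f z)) (min_le_right (f x) (f z)) hy)
  · exact hc.trans_le (hq.trans (hf0 y))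

end LogConcaveFn

theorem add_slope_mul_sub_eq (φ : ℝ → ℝ) (a x : ℝ) : φ a + slope φ a x * (x - a) = φ x := by
  rw [← sub_smul_slope_vadd φ a x, smul_eq_mul, vadd_eq_add]
  ring

namespace ConvexOn

variable {φ : ℝ → ℝ} {a b x : ℝ}

theorem le_chord (hφ : ConvexOn ℝ univ φ) (hab : a < b) (hx : x ∈ Icc a b) :
    φ x ≤ φ a + slope φ a b * (x - a) := by
  rcases hx.1.eq_or_lt with rfl | hax
  · simp
  have := hφ.slope_mono (mem_univ a) ⟨mem_univ x, hax.ne'⟩ ⟨mem_univ b, hab.ne'⟩ hx.2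
  calc φ x = φ a + slope φ a x * (x - a) := (add_slope_mul_sub_eq φ a x).symm
    _ ≤ φ a + slope φ a b * (x - a) := by gcongr

theorem chord_le (hφ : ConvexOn ℝ univ φ) (hab : a < b) (hx : x ∉ Ioo a b) :
    φ a + slope φ a b * (x - a) ≤ φ x := by
  rw [← add_slope_mul_sub_eq φ a x]
  rcases lt_trichotomy x a with hxa | rfl | hax
  · have := hφ.slope_mono (mem_univ a) ⟨mem_univ x, hxa.ne⟩ ⟨mem_univ b, hab.ne'⟩
      (hxa.trans hab).le
    nlinarith
  · simp
  · have hbx : b ≤ x := not_lt.1 fun hxb => hx ⟨hax, hxb⟩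
    have := hφ.slope_mono (mem_univ a) ⟨mem_univ b, hab.ne'⟩ ⟨mem_univ x, hax.ne'⟩ hbx
    nlinarith

end ConvexOn

structure SameMassAndMean (f g : ℝ → ℝ) : Prop where
  integrable_left : Integrable f
  integrable_right : Integrable g
  integrable_id_mul_left : Integrable fun x => x * f x
  integrable_id_mul_right : Integrable fun x => x * g x
  integral_eq : ∫ x, f x = ∫ x, g x
  integral_id_mul_eq : ∫ x, x * f x = ∫ x, x * g x

namespace SameMassAndMean

variable {f g φ : ℝ → ℝ}

theorem integrable_sub (h : SameMassAndMean f g) : Integrable fun x => f x - g x :=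
  h.integrable_left.sub h.integrable_right

theorem integrable_id_mul_sub (h : SameMassAndMean f g) :
    Integrable fun x => x * f x - x * g x :=
  h.integrable_id_mul_left.sub h.integrable_id_mul_right

theorem integrable_affine_mul_sub (h : SameMassAndMean f g) (α β c : ℝ) :
    Integrable fun x => (α + β * (x - c)) * (f x - g x) := by
  have hsplit : ∀ x, (α + β * (x - c)) * (f x - g x) =
      (α - β * c) * (f x - g x) + β * (x * f x - x * g x) := fun x => by ring
  simp_rw [hsplit]
  exact (h.integrable_sub.const_mul _).add (h.integrable_id_mul_sub.const_mul _)

theorem integral_affine_mul_sub (h : SameMassAndMean f g) (α β c : ℝ) :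
    ∫ x, (α + β * (x - c)) * (f x - g x) = 0 := by
  have hsplit : ∀ x, (α + β * (x - c)) * (f x - g x) =
      (α - β * c) * (f x - g x) + β * (x * f x - x * g x) := fun x => by ring
  simp_rw [hsplit]
  rw [integral_add (h.integrable_sub.const_mul _) (h.integrable_id_mul_sub.const_mul _),
    integral_const_mul, integral_const_mul, integral_sub h.integrable_left h.integrable_right,
    integral_sub h.integrable_id_mul_left h.integrable_id_mul_right, h.integral_eq,
    h.integral_id_mul_eq]
  ring

theorem ae_eq_of_single_crossing (h : SameMassAndMean f g) (a : ℝ)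
    (hlt : ∀ᵐ x, x < a → f x ≤ g x) (hgt : ∀ᵐ x, a < x → g x ≤ f x) : f =ᵐ[volume] g := by
  have hnonneg : ∀ᵐ x, 0 ≤ (0 + 1 * (x - a)) * (f x - g x) := by
    filter_upwards [hlt, hgt] with x hlt hgt
    rcases lt_trichotomy x a with hxa | rfl | hax
    · exact mul_nonneg_of_nonpos_of_nonpos (by linarith) (by linarith [hlt hxa])
    · simp
    · exact mul_nonneg (by linarith) (by linarith [hgt hax])
  have hzero := (integral_eq_zero_iff_of_nonneg_ae hnonneg
    (h.integrable_affine_mul_sub 0 1 a)).1 (h.integral_affine_mul_sub 0 1 a)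
  filter_upwards [hzero, volume.ae_ne a] with x hx hxa
  simpa [sub_eq_zero, hxa] using hx

theorem integral_convex_mul_le_of_double_crossing (h : SameMassAndMean f g) (hf0 : ∀ x, 0 ≤ f x)
    {a b : ℝ} (hab : a < b) (hin : ∀ᵐ x, x ∈ Ioo a b → g x ≤ f x)
    (hout : ∀ᵐ x, x ∉ Icc a b → f x ≤ g x) (hφ : ConvexOn ℝ univ φ)
    (hφg : Integrable fun x => φ x * g x) :
    Integrable (fun x => φ x * f x) ∧ ∫ x, φ x * f x ≤ ∫ x, φ x * g x := by
  obtain ⟨C, hC⟩ := isCompact_Icc.exists_bound_of_continuousOn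
    (hφ.locallyLipschitz.continuous.continuousOn (s := Icc a b))
  have hφf : Integrable fun x => φ x * f x := by
    refine ((h.integrable_left.const_mul C).add hφg.norm).mono'
      (hφ.locallyLipschitz.continuous.aestronglyMeasurable.mul
        h.integrable_left.aestronglyMeasurable) ?_
    filter_upwards [hout] with x hout
    show ‖φ x * f x‖ ≤ C * f x + ‖φ x * g x‖
    rw [norm_mul, norm_mul, Real.norm_of_nonneg (hf0 x)]
    by_cases hx : x ∈ Icc a b
    · nlinarith [hC x hx, hf0 x, norm_nonneg (φ x), norm_nonneg (g x)]
    · have hfg := hout hx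
      rw [Real.norm_of_nonneg ((hf0 x).trans hfg)]
      have hC0 : 0 ≤ C := (norm_nonneg _).trans (hC a ⟨le_rfl, hab.le⟩)
      nlinarith [mul_le_mul_of_nonneg_left hfg (norm_nonneg (φ x)), mul_nonneg hC0 (hf0 x)]
  refine ⟨hφf, ?_⟩
  have hsign : ∀ᵐ x, (φ x - (φ a + slope φ a b * (x - a))) * (f x - g x) ≤ 0 := by
    filter_upwards [hin, hout] with x hin hout
    by_cases hxin : x ∈ Ioo a b
    · exact mul_nonpos_of_nonpos_of_nonneg
        (by linarith [hφ.le_chord hab (Ioo_subset_Icc_self hxin)]) (by linarith [hin hxin])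
    by_cases hx : x ∈ Icc a b
    · simp [le_antisymm (hφ.le_chord hab hx) (hφ.chord_le hab hxin)]
    · exact mul_nonpos_of_nonneg_of_nonpos (by linarith [hφ.chord_le hab hxin])
        (by linarith [hout hx])
  have hdiff : ∫ x, (φ x - (φ a + slope φ a b * (x - a))) * (f x - g x) =
      (∫ x, φ x * f x) - ∫ x, φ x * g x := by
    simp_rw [sub_mul _ (φ a + _)]
    rw [integral_sub _ (h.integrable_affine_mul_sub _ _ _), h.integral_affine_mul_sub, sub_zero]
    · simp_rw [mul_sub]
      exact integral_sub hφf hφg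
    · simp_rw [mul_sub]
      exact hφf.sub hφg
  linarith [integral_nonpos_of_ae hsign]

theorem integral_convex_mul_le_of_ordConnected (h : SameMassAndMean f g) (hf0 : ∀ x, 0 ≤ f x)
    {J : Set ℝ} (hJ : J.OrdConnected) (hJb : BddBelow J) (hin : ∀ᵐ x, x ∈ J → g x ≤ f x)
    (hout : ∀ᵐ x, x ∉ J → f x ≤ g x) (hφ : ConvexOn ℝ univ φ)
    (hφg : Integrable fun x => φ x * g x) :
    Integrable (fun x => φ x * f x) ∧ ∫ x, φ x * f x ≤ ∫ x, φ x * g x := by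
  have of_ae_eq (hfg : f =ᵐ[volume] g) :
      Integrable (fun x => φ x * f x) ∧ ∫ x, φ x * f x ≤ ∫ x, φ x * g x := by
    have hφfg : (fun x => φ x * f x) =ᵐ[volume] fun x => φ x * g x := by
      filter_upwards [hfg] with x hx
      rw [hx]
    exact ⟨hφg.congr hφfg.symm, (integral_congr_ae hφfg).le⟩
  by_cases hJa : BddAbove J
  · have hJab : J ⊆ Icc (sInf J) (sSup J) := subset_Icc_csInf_csSup hJb hJa
    rcases lt_or_ge (sInf J) (sSup J) with hab | hba
    · have hne : J.Nonempty := by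
        -- `sInf ∅ = sSup ∅ = 0` in `ℝ`
        by_contra hJe
        simp [not_nonempty_iff_eq_empty.1 hJe] at hab
      refine h.integral_convex_mul_le_of_double_crossing hf0 hab ?_ ?_ hφ hφg
      · filter_upwards [hin] with x hx hxab using
          hx (IsConnected.Ioo_csInf_csSup_subset ⟨hne, hJ.isPreconnected⟩ hJb hJa hxab)
      · filter_upwards [hout] with x hx hxab using hx fun hxJ => hxab (hJab hxJ)
    · refine of_ae_eq ((integral_eq_iff_of_ae_le h.integrable_left h.integrable_right ?_).1
        h.integral_eq)
      filter_upwards [hout, volume.ae_ne (sInf J)] with x hx hxa using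
        hx fun hxJ => hxa (le_antisymm ((hJab hxJ).2.trans hba) (hJab hxJ).1)
  · have hne : J.Nonempty := (not_bddAbove_iff.1 hJa 0).imp fun _ hx => hx.1
    refine of_ae_eq (h.ae_eq_of_single_crossing (sInf J) ?_ ?_)
    · filter_upwards [hout] with x hx hxa using hx fun hxJ => (csInf_le hJb hxJ).not_gt hxa
    · filter_upwards [hin] with x hx hax
      obtain ⟨j, hj, hjx⟩ := exists_lt_of_csInf_lt hne hax
      obtain ⟨k, hk, hxk⟩ := not_bddAbove_iff.1 hJa x
      exact hx (hJ.out hj hk ⟨hjx.le, hxk.le⟩)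

end SameMassAndMean

namespace ProbabilityTheory

section ExponentialPDF

variable {r t : ℝ}

theorem exponentialPDFReal_of_nonneg {x : ℝ} (hx : 0 ≤ x) :
    exponentialPDFReal r x = r * exp (-(r * x)) := by
  simp [exponentialPDFReal, gammaPDFReal, hx]

theorem exponentialPDFReal_of_neg {x : ℝ} (hx : x < 0) : exponentialPDFReal r x = 0 := by
  simp [exponentialPDFReal, gammaPDFReal, hx]

theorem integral_mul_exponentialPDFReal (φ : ℝ → ℝ) :
    ∫ x, φ x * exponentialPDFReal r x = ∫ x in Ioi 0, r * (φ x * exp (-(r * x))) := by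
  have : (fun x => φ x * exponentialPDFReal r x) =
      (Ici 0).indicator fun x => r * (φ x * exp (-(r * x))) := by
    ext x
    rcases lt_or_ge x 0 with hx | hx
    · simp [exponentialPDFReal_of_neg hx, hx]
    · simp [exponentialPDFReal_of_nonneg hx, hx]
      ring
  rw [this, integral_indicator measurableSet_Ici, integral_Ici_eq_integral_Ioi]

theorem integral_exponentialPDFReal (hr : 0 < r) : ∫ x, exponentialPDFReal r x = 1 := by
  have h := integral_rpow_mul_exp_neg_mul_Ioi zero_lt_one hr
  simp only [sub_self, rpow_zero, one_mul, Gamma_one, mul_one, rpow_one] at h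
  simpa [integral_const_mul, h, hr.ne'] using integral_mul_exponentialPDFReal (r := r) fun _ => 1

theorem integral_id_mul_exponentialPDFReal (hr : 0 < r) :
    ∫ x, x * exponentialPDFReal r x = r⁻¹ := by
  have h := integral_rpow_mul_exp_neg_mul_Ioi two_pos hr
  norm_num [Gamma_two] at h
  rw [integral_mul_exponentialPDFReal, integral_const_mul, h]
  field_simp

theorem exp_mul_mul_exponentialPDFReal (ht : t < r) (x : ℝ) :
    exp (t * x) * exponentialPDFReal r x = r / (r - t) * exponentialPDFReal (r - t) x := by
  rcases lt_or_ge x 0 with hx | hx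
  · simp [exponentialPDFReal_of_neg hx]
  · rw [exponentialPDFReal_of_nonneg hx, exponentialPDFReal_of_nonneg hx, ← mul_assoc (r / _),
      div_mul_cancel₀ _ (sub_ne_zero.2 ht.ne'), mul_left_comm, ← exp_add]
    ring_nf

theorem integral_exp_mul_mul_exponentialPDFReal (ht : t < r) :
    ∫ x, exp (t * x) * exponentialPDFReal r x = r / (r - t) := by
  simp_rw [exp_mul_mul_exponentialPDFReal ht, integral_const_mul,
    integral_exponentialPDFReal (sub_pos.2 ht), mul_one]

theorem sameMassAndMean_exponentialPDFReal {f : ℝ → ℝ} (hf : Integrable f)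
    (hmass : ∫ x, f x = 1) (hxf : Integrable fun x => x * f x) {μ : ℝ} (hμ : 0 < μ)
    (hmean : ∫ x, x * f x = μ) : SameMassAndMean f (exponentialPDFReal μ⁻¹) := by
  have hr : 0 < μ⁻¹ := inv_pos.2 hμ
  have hmass' := integral_exponentialPDFReal hr
  have hmean' := integral_id_mul_exponentialPDFReal hr
  refine ⟨hf, .of_integral_ne_zero ?_, hxf, .of_integral_ne_zero ?_, ?_, ?_⟩
  · simp [hmass']
  · simp [hmean', hμ.ne']
  · rw [hmass, hmass']
  · rw [hmean, hmean', inv_inv]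

end ExponentialPDF

end ProbabilityTheory

theorem LogConcaveFn.integral_convex_mul_le_exponentialPDFReal {f φ : ℝ → ℝ}
    (hf0 : ∀ x, 0 ≤ f x) (hf : LogConcaveFn f) (hneg : ∀ᵐ x, x < 0 → f x = 0) {μ : ℝ}
    (hμ : 0 < μ) (hmoments : SameMassAndMean f (exponentialPDFReal μ⁻¹))
    (hφ : ConvexOn ℝ univ φ) (hφg : Integrable fun x => φ x * exponentialPDFReal μ⁻¹ x) :
    Integrable (fun x => φ x * f x) ∧
      ∫ x, φ x * f x ≤ ∫ x, φ x * exponentialPDFReal μ⁻¹ x := by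
  have hr : 0 < μ⁻¹ := inv_pos.2 hμ
  refine hmoments.integral_convex_mul_le_of_ordConnected hf0
    (ordConnected_Ici.inter (hf.ordConnected_setOf_mul_exp_le_s6 hr (-μ⁻¹))) ⟨0, fun _ hx => hx.1⟩
    (ae_of_all _ fun x ⟨hx0, hx⟩ => ?_) ?_ hφ hφg
  · simpa [exponentialPDFReal_of_nonneg hx0] using hx
  · filter_upwards [hneg] with x hneg hxJ
    rcases lt_or_ge x 0 with hx0 | hx0
    · simp [hneg hx0, exponentialPDFReal_of_neg hx0]
    · have : ¬μ⁻¹ * exp (-μ⁻¹ * x) ≤ f x := fun hx => hxJ ⟨hx0, hx⟩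
      simp only [exponentialPDFReal_of_nonneg hx0, neg_mul] at this ⊢
      linarith

namespace ProbabilityTheory

section Density

variable {Ω : Type*} [MeasurableSpace Ω] {P : Measure Ω} {X : Ω → ℝ} {f : ℝ → ℝ}

theorem integrable_comp_iff_of_map_eq_withDensity (hX : AEMeasurable X P) (hf : Measurable f)
    (hf0 : ∀ x, 0 ≤ f x) (hdens : P.map X = volume.withDensity fun x => ENNReal.ofReal (f x))
    {φ : ℝ → ℝ} (hφ : Measurable φ) :
    Integrable (fun ω => φ (X ω)) P ↔ Integrable fun x => φ x * f x := by
  rw [← Function.comp_def, ← integrable_map_measure hφ.aestronglyMeasurable hX, hdens,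
    integrable_withDensity_iff_integrable_smul' hf.ennreal_ofReal
      (ae_of_all _ fun _ => ENNReal.ofReal_lt_top)]
  simp [ENNReal.toReal_ofReal (hf0 _), mul_comm]

theorem integral_comp_eq_of_map_eq_withDensity (hX : AEMeasurable X P) (hf : Measurable f)
    (hf0 : ∀ x, 0 ≤ f x) (hdens : P.map X = volume.withDensity fun x => ENNReal.ofReal (f x))
    {φ : ℝ → ℝ} (hφ : Measurable φ) :
    ∫ ω, φ (X ω) ∂P = ∫ x, φ x * f x := by
  rw [← integral_map hX hφ.aestronglyMeasurable, hdens,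
    integral_withDensity_eq_integral_toReal_smul hf.ennreal_ofReal
      (ae_of_all _ fun _ => ENNReal.ofReal_lt_top)]
  simp [ENNReal.toReal_ofReal (hf0 _), mul_comm]

theorem ae_eq_zero_of_neg_of_map_eq_withDensity (hX : AEMeasurable X P) (hf : Measurable f)
    (hf0 : ∀ x, 0 ≤ f x) (hdens : P.map X = volume.withDensity fun x => ENNReal.ofReal (f x))
    (hpos : ∀ᵐ ω ∂P, 0 ≤ X ω) : ∀ᵐ x, x < 0 → f x = 0 := by
  have hnull : P.map X (Iio 0) = 0 := by
    rw [Measure.map_apply_of_aemeasurable hX measurableSet_Iio]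
    exact measure_mono_null (fun ω hω => not_le.2 hω) (ae_iff.1 hpos)
  rw [hdens, withDensity_apply _ measurableSet_Iio,
    setLIntegral_eq_zero_iff measurableSet_Iio hf.ennreal_ofReal] at hnull
  filter_upwards [hnull] with x hx hx0
  exact le_antisymm (ENNReal.ofReal_eq_zero.1 (hx hx0)) (hf0 x)

theorem mgf_le_inv_one_sub_mul_of_logConcave [IsProbabilityMeasure P] (hX : Measurable X)
    (hpos : ∀ᵐ ω ∂P, 0 ≤ X ω) (hf0 : ∀ x, 0 ≤ f x) (hf : LogConcaveFn f)
    (hdens : P.map X = volume.withDensity fun x => ENNReal.ofReal (f x)) {μ : ℝ} (hμ : 0 < μ)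
    (hmean : ∫ ω, X ω ∂P = μ) {t : ℝ} (ht : t * μ < 1) :
    Integrable (fun ω => exp (t * X ω)) P ∧ mgf X P t ≤ (1 - t * μ)⁻¹ := by
  have hfm := hf.measurable_s6 hf0
  have hintegrable := fun φ =>
    integrable_comp_iff_of_map_eq_withDensity hX.aemeasurable hfm hf0 hdens (φ := φ)
  have hintegral := fun φ =>
    integral_comp_eq_of_map_eq_withDensity hX.aemeasurable hfm hf0 hdens (φ := φ)
  have hmoments : SameMassAndMean f (exponentialPDFReal μ⁻¹) := by
    refine sameMassAndMean_exponentialPDFReal ?_ ?_ ?_ hμ ?_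
    · simpa using (hintegrable _ measurable_const).1 (integrable_const (1 : ℝ))
    · simpa using (hintegral (fun _ => 1) measurable_const).symm
    · exact (hintegrable _ measurable_id).1 (.of_integral_ne_zero (hmean ▸ hμ.ne'))
    · exact (hintegral _ measurable_id).symm.trans hmean
  have htr : t < μ⁻¹ := by rwa [← one_div, lt_div_iff₀ hμ]
  have hexp := integral_exp_mul_mul_exponentialPDFReal htr
  obtain ⟨hφf, hle⟩ := hf.integral_convex_mul_le_exponentialPDFReal (φ := fun x => exp (t * x))
    hf0 (ae_eq_zero_of_neg_of_map_eq_withDensity hX.aemeasurable hfm hf0 hdens hpos) hμ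
    hmoments (convexOn_exp.comp_linearMap (LinearMap.mulLeft ℝ t))
    (.of_integral_ne_zero (by rw [hexp]; exact (div_pos (inv_pos.2 hμ) (sub_pos.2 htr)).ne'))
  have hmeas : Measurable fun x => exp (t * x) := (measurable_const_mul t).exp
  refine ⟨(hintegrable _ hmeas).2 hφf, ?_⟩
  calc mgf X P t = ∫ x, exp (t * x) * f x := hintegral _ hmeas
    _ ≤ μ⁻¹ / (μ⁻¹ - t) := hexp ▸ hle
    _ = (1 - t * μ)⁻¹ := by field_simp

end Density

theorem iIndepFun.measureReal_sum_ge_le_of_mgf_le {Ω ι : Type*} [MeasurableSpace Ω]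
    {P : Measure Ω} [Fintype ι] {X : ι → Ω → ℝ} (hindep : iIndepFun X P)
    (hX : ∀ i, Measurable (X i)) {t M : ℝ} (ht : 0 ≤ t)
    (hint : ∀ i, Integrable (fun ω => exp (t * X i ω)) P) (hmgf : ∀ i, mgf (X i) P t ≤ M)
    (a : ℝ) : P.real {ω | a ≤ ∑ i, X i ω} ≤ exp (-t * a) * M ^ Fintype.card ι := by
  have := hindep.isProbabilityMeasure
  have hchernoff := measure_ge_le_exp_mul_mgf a ht
    (hindep.integrable_exp_mul_sum hX (s := Finset.univ) fun i _ => hint i)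
  simp only [hindep.mgf_sum hX, Finset.sum_apply] at hchernoff
  refine hchernoff.trans (mul_le_mul_of_nonneg_left ?_ (exp_pos _).le)
  calc ∏ i, mgf (X i) P t ≤ ∏ _i : ι, M :=
        Finset.prod_le_prod (fun _ _ => mgf_nonneg) fun i _ => hmgf i
    _ = M ^ Fintype.card ι := by simp

end ProbabilityTheory

/-- Upper tail bound for a sum of `n` independent nonnegative logconcave random variables
with common mean `μ`: `Pr[∑ Xᵢ ≥ (1+ε) μ n] ≤ exp (−n (ε − ln (1+ε)))`. -/
theorem sum_nonneg_logconcave_upper_tail {Ω : Type*} [MeasurableSpace Ω] (P : Measure Ω)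
    [IsProbabilityMeasure P] {n : ℕ} (X : Fin n → Ω → ℝ)
    (hX : ∀ i, Measurable (X i))
    (hindep : iIndepFun X P)
    (hpos : ∀ i, ∀ᵐ ω ∂P, 0 ≤ X i ω)
    (f : Fin n → ℝ → ℝ) (hf : ∀ i t, 0 ≤ f i t) (hlc : ∀ i, LogConcaveFn (f i))
    (hdens : ∀ i, P.map (X i) = volume.withDensity (fun t => ENNReal.ofReal (f i t)))
    (μ : ℝ) (hμ : 0 < μ) (hmean : ∀ i, ∫ ω, X i ω ∂P = μ)
    (ε : ℝ) (hε : 0 < ε) :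
    P {ω | (1 + ε) * μ * n ≤ ∑ i, X i ω} ≤
      ENNReal.ofReal (Real.exp (-(n * (ε - Real.log (1 + ε))))) := by
  have h1ε : 0 < 1 + ε := by linarith
  set t := ε / ((1 + ε) * μ) with ht
  have htμ : t * μ = 1 - (1 + ε)⁻¹ := by
    rw [ht]
    field_simp
    ring
  have hmgf i := mgf_le_inv_one_sub_mul_of_logConcave (hX i) (hpos i) (hf i) (hlc i) (hdens i) hμ
    (hmean i) (t := t) (by rw [htμ]; linarith [inv_pos.2 h1ε])
  rw [htμ, sub_sub_cancel, inv_inv] at hmgf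
  have hchernoff := hindep.measureReal_sum_ge_le_of_mgf_le hX (by positivity)
    (fun i => (hmgf i).1) (fun i => (hmgf i).2) ((1 + ε) * μ * n)
  have hrate : exp (-t * ((1 + ε) * μ * n)) * (1 + ε) ^ Fintype.card (Fin n) =
      exp (-(n * (ε - log (1 + ε)))) := by
    rw [Fintype.card_fin, ← exp_log (pow_pos h1ε n), log_pow, ← exp_add, ht]
    congr 1
    field_simp
    ring
  rw [hrate] at hchernoff
  exact (ENNReal.le_ofReal_iff_toReal_le (measure_ne_top P _) (exp_pos _).le).2 hchernoff
end

section
/- Let X_1,...,X_n be independent mean-zero real random variables satisfying E[X_i⁴] ≤ 3·E[X_i²]² < ∞ for all i. Then for any scalars a_1,...,a_n, letting Z = |∑ a_i X_i|, one has E[Z⁴] ≤ 3·E[Z²]² and E[Z²] ≤ 3·E[Z]². -/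
/-!
Expanding `(X + Y)⁴` for independent mean-zero `X, Y` kills the odd cross moments, leaving
`E X⁴ + 6 E X² E Y² + E Y⁴ ≤ 3 (E X² + E Y²)² = 3 E[(X + Y)²]²`, so the bound `E S⁴ ≤ 3 (E S²)²`
passes from the `aᵢ Xᵢ` to their sum. For `Z = |S|` the moments are log-convex: integrating
`Z^k (t - Z)² ≥ 0` and taking the discriminant in `t` gives `(E Z^(k+1))² ≤ E Z^k E Z^(k+2)`,
whence `(E Z²)³ ≤ (E Z)² E Z⁴ ≤ 3 (E Z)² (E Z²)²`.
-/

open MeasureTheory ProbabilityTheory Finset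

section

variable {Ω : Type*} {m : MeasurableSpace Ω} {μ : Measure Ω}

lemma MeasureTheory.MemLp.integrable_pow [IsFiniteMeasure μ] {f : Ω → ℝ} {n k : ℕ}
    (hf : MemLp f n μ) (hk : k ≤ n) : Integrable (fun ω ↦ f ω ^ k) μ := by
  have h := (hf.mono_exponent (p := k) (by exact_mod_cast hk)).integrable_norm_pow'
  have hmeas : AEStronglyMeasurable (fun ω ↦ f ω ^ k) μ := hf.aestronglyMeasurable.pow k
  exact (integrable_norm_iff hmeas).mp (by simpa only [norm_pow] using h)

section Moments

variable {X Y : Ω → ℝ}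

theorem ProbabilityTheory.IndepFun.integral_add_pow [IsFiniteMeasure μ] {n : ℕ}
    (hXY : IndepFun X Y μ) (hX : MemLp X n μ) (hY : MemLp Y n μ) :
    ∫ ω, (X ω + Y ω) ^ n ∂μ =
      ∑ k ∈ range (n + 1), (∫ ω, X ω ^ k ∂μ) * (∫ ω, Y ω ^ (n - k) ∂μ) * n.choose k := by
  simp_rw [add_pow]
  have hprod (k : ℕ) (hk : k ∈ range (n + 1)) :
      Integrable (fun ω ↦ X ω ^ k * Y ω ^ (n - k)) μ :=
    (hXY.comp (measurable_id.pow_const k) (measurable_id.pow_const (n - k))).integrable_mul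
      (hX.integrable_pow (mem_range_succ_iff.mp hk)) (hY.integrable_pow (Nat.sub_le n k))
  rw [integral_finsetSum _ fun k hk ↦ (hprod k hk).mul_const _]
  refine sum_congr rfl fun k _ ↦ ?_
  rw [integral_mul_const, hXY.integral_fun_comp_mul_comp (f := (· ^ k)) (g := (· ^ (n - k)))
    hX.aemeasurable hY.aemeasurable (continuous_pow k).aestronglyMeasurable
    (continuous_pow (n - k)).aestronglyMeasurable]

variable [IsProbabilityMeasure μ]

theorem ProbabilityTheory.IndepFun.integral_add_sq (hXY : IndepFun X Y μ) (hX : MemLp X 2 μ)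
    (hY : MemLp Y 2 μ) (hX0 : ∫ ω, X ω ∂μ = 0) :
    ∫ ω, (X ω + Y ω) ^ 2 ∂μ = ∫ ω, X ω ^ 2 ∂μ + ∫ ω, Y ω ^ 2 ∂μ := by
  rw [hXY.integral_add_pow (n := 2) hX hY]
  simp only [sum_range_succ, sum_range_zero, Nat.reduceSub, pow_zero, pow_one, integral_const,
    probReal_univ, smul_eq_mul, hX0, Nat.choose_zero_right, Nat.choose_self]
  ring

theorem ProbabilityTheory.IndepFun.integral_add_pow_four (hXY : IndepFun X Y μ)
    (hX : MemLp X 4 μ) (hY : MemLp Y 4 μ) (hX0 : ∫ ω, X ω ∂μ = 0) (hY0 : ∫ ω, Y ω ∂μ = 0) :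
    ∫ ω, (X ω + Y ω) ^ 4 ∂μ =
      ∫ ω, X ω ^ 4 ∂μ + 6 * (∫ ω, X ω ^ 2 ∂μ) * (∫ ω, Y ω ^ 2 ∂μ) + ∫ ω, Y ω ^ 4 ∂μ := by
  rw [hXY.integral_add_pow (n := 4) hX hY]
  simp only [sum_range_succ, sum_range_zero, Nat.reduceSub, pow_zero, pow_one, integral_const,
    probReal_univ, smul_eq_mul, hX0, hY0, Nat.choose, Nat.reduceAdd, Nat.cast_ofNat]
  ring

theorem ProbabilityTheory.IndepFun.integral_add_pow_four_le (hXY : IndepFun X Y μ)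
    (hX : MemLp X 4 μ) (hY : MemLp Y 4 μ) (hX0 : ∫ ω, X ω ∂μ = 0) (hY0 : ∫ ω, Y ω ∂μ = 0)
    (hXk : ∫ ω, X ω ^ 4 ∂μ ≤ 3 * (∫ ω, X ω ^ 2 ∂μ) ^ 2)
    (hYk : ∫ ω, Y ω ^ 4 ∂μ ≤ 3 * (∫ ω, Y ω ^ 2 ∂μ) ^ 2) :
    ∫ ω, (X ω + Y ω) ^ 4 ∂μ ≤ 3 * (∫ ω, (X ω + Y ω) ^ 2 ∂μ) ^ 2 := by
  rw [hXY.integral_add_pow_four hX hY hX0 hY0,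
    hXY.integral_add_sq (hX.mono_exponent (by norm_num)) (hY.mono_exponent (by norm_num)) hX0]
  linear_combination hXk + hYk

theorem ProbabilityTheory.iIndepFun.integral_sum_pow_four_le {ι : Type*} {X : ι → Ω → ℝ}
    (hindep : iIndepFun X μ) (hL4 : ∀ i, MemLp (X i) 4 μ) (hmean : ∀ i, ∫ ω, X i ω ∂μ = 0)
    (hkurt : ∀ i, ∫ ω, X i ω ^ 4 ∂μ ≤ 3 * (∫ ω, X i ω ^ 2 ∂μ) ^ 2) (s : Finset ι) :
    ∫ ω, (∑ i ∈ s, X i ω) ^ 4 ∂μ ≤ 3 * (∫ ω, (∑ i ∈ s, X i ω) ^ 2 ∂μ) ^ 2 := by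
  classical
  induction s using Finset.induction_on with
  | empty => simp
  | @insert j s hj ih =>
    have hindep_sum : IndepFun (X j) (fun ω ↦ ∑ i ∈ s, X i ω) μ := by
      simpa only [← Finset.sum_apply] using
        (hindep.indepFun_finsetSum_of_notMem₀ (fun i ↦ (hL4 i).aemeasurable) hj).symm
    have hmean_sum : ∫ ω, ∑ i ∈ s, X i ω ∂μ = 0 := by
      simp [integral_finsetSum s fun i _ ↦ (hL4 i).integrable (by norm_num), hmean]
    simp_rw [sum_insert hj]
    exact hindep_sum.integral_add_pow_four_le (hL4 j) (memLp_finsetSum s fun i _ ↦ hL4 i)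
      (hmean j) hmean_sum (hkurt j) ih

end Moments

lemma integral_const_mul_pow_four_le {X : Ω → ℝ} (c : ℝ)
    (hX : ∫ ω, X ω ^ 4 ∂μ ≤ 3 * (∫ ω, X ω ^ 2 ∂μ) ^ 2) :
    ∫ ω, (c * X ω) ^ 4 ∂μ ≤ 3 * (∫ ω, (c * X ω) ^ 2 ∂μ) ^ 2 := by
  simp_rw [mul_pow]
  rw [integral_const_mul, integral_const_mul]
  linear_combination mul_le_mul_of_nonneg_left hX (by positivity : (0 : ℝ) ≤ c ^ 4)

lemma sq_integral_pow_succ_le [IsFiniteMeasure μ] {Z : Ω → ℝ} {k : ℕ} (hZ : ∀ ω, 0 ≤ Z ω)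
    (hZk : MemLp Z (k + 2 : ℕ) μ) :
    (∫ ω, Z ω ^ (k + 1) ∂μ) ^ 2 ≤ (∫ ω, Z ω ^ k ∂μ) * ∫ ω, Z ω ^ (k + 2) ∂μ := by
  have h0 := hZk.integrable_pow (k := k) (by omega)
  have h1 := hZk.integrable_pow (k := k + 1) (by omega)
  have h2 := hZk.integrable_pow (k := k + 2) le_rfl
  have hquad (t : ℝ) : 0 ≤ (∫ ω, Z ω ^ k ∂μ) * (t * t) + (-2 * ∫ ω, Z ω ^ (k + 1) ∂μ) * t
      + ∫ ω, Z ω ^ (k + 2) ∂μ := by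
    have hexpand : ∫ ω, Z ω ^ k * (t - Z ω) ^ 2 ∂μ =
        ∫ ω, (t * t * Z ω ^ k - 2 * t * Z ω ^ (k + 1)) + Z ω ^ (k + 2) ∂μ :=
      integral_congr_ae (.of_forall fun ω ↦ by ring)
    have hpoly : Integrable (fun ω ↦ t * t * Z ω ^ k - 2 * t * Z ω ^ (k + 1)) μ :=
      (h0.const_mul _).sub (h1.const_mul _)
    rw [integral_add hpoly h2,
      integral_sub (h0.const_mul _) (h1.const_mul _), integral_const_mul,
      integral_const_mul] at hexpand
    have hnonneg : 0 ≤ ∫ ω, Z ω ^ k * (t - Z ω) ^ 2 ∂μ :=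
      integral_nonneg fun ω ↦ mul_nonneg (pow_nonneg (hZ ω) k) (sq_nonneg (t - Z ω))
    linarith
  have hdiscrim := discrim_le_zero hquad
  rw [discrim] at hdiscrim
  linarith

lemma integral_abs_sq_pow_three_le [IsFiniteMeasure μ] {f : Ω → ℝ} (hf : MemLp f 4 μ) :
    (∫ ω, |f ω| ^ 2 ∂μ) ^ 3 ≤ (∫ ω, |f ω| ∂μ) ^ 2 * ∫ ω, |f ω| ^ 4 ∂μ := by
  have habs : ∀ ω, 0 ≤ |f ω| := fun ω ↦ abs_nonneg _
  have h13 := sq_integral_pow_succ_le (k := 1) habs (hf.abs.mono_exponent (by norm_num))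
  have h24 := sq_integral_pow_succ_le (k := 2) habs hf.abs
  simp only [pow_one] at h13
  set A := ∫ ω, |f ω| ^ 2 ∂μ
  set B := ∫ ω, |f ω| ∂μ
  set C := ∫ ω, |f ω| ^ 3 ∂μ
  have hA : 0 ≤ A := integral_nonneg fun ω ↦ by positivity
  have hmul : A * A ^ 3 ≤ A * (B ^ 2 * ∫ ω, |f ω| ^ 4 ∂μ) :=
    calc A * A ^ 3 = (A ^ 2) ^ 2 := by ring
      _ ≤ (B * C) ^ 2 := pow_le_pow_left₀ (by positivity) h13 2
      _ = B ^ 2 * C ^ 2 := by ring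
      _ ≤ B ^ 2 * (A * ∫ ω, |f ω| ^ 4 ∂μ) := mul_le_mul_of_nonneg_left h24 (by positivity)
      _ = A * (B ^ 2 * ∫ ω, |f ω| ^ 4 ∂μ) := by ring
  rcases hA.eq_or_lt with hA0 | hApos
  · rw [← hA0, zero_pow three_ne_zero]
    exact mul_nonneg (by positivity) (integral_nonneg fun ω ↦ by positivity)
  · exact le_of_mul_le_mul_left hmul hApos

end

theorem khinchine_type_inequality_general {Ω : Type*} [MeasurableSpace Ω] (P : Measure Ω)
    [IsProbabilityMeasure P] {n : ℕ} (X : Fin n → Ω → ℝ)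
    (hindep : iIndepFun X P)
    (hL4 : ∀ i, MemLp (X i) 4 P)
    (hmean : ∀ i, ∫ ω, X i ω ∂P = 0)
    (hkurt : ∀ i, ∫ ω, (X i ω) ^ 4 ∂P ≤ 3 * (∫ ω, (X i ω) ^ 2 ∂P) ^ 2)
    (a : Fin n → ℝ) :
    (∫ ω, |∑ i, a i * X i ω| ^ 4 ∂P ≤ 3 * (∫ ω, |∑ i, a i * X i ω| ^ 2 ∂P) ^ 2) ∧
      ∫ ω, |∑ i, a i * X i ω| ^ 2 ∂P ≤ 3 * (∫ ω, |∑ i, a i * X i ω| ∂P) ^ 2 := by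
  have hL4_scaled (i : Fin n) : MemLp (fun ω ↦ a i * X i ω) 4 P := (hL4 i).const_mul (a i)
  have hfourth : ∫ ω, |∑ i, a i * X i ω| ^ 4 ∂P ≤ 3 * (∫ ω, |∑ i, a i * X i ω| ^ 2 ∂P) ^ 2 := by
    simp only [Even.pow_abs (by decide : Even 4), sq_abs]
    exact iIndepFun.integral_sum_pow_four_le
      (hindep.comp (fun i x ↦ a i * x) fun i ↦ measurable_const_mul (a i)) hL4_scaled
      (fun i ↦ by simp [integral_const_mul, hmean i])
      (fun i ↦ integral_const_mul_pow_four_le (a i) (hkurt i)) univ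
  refine ⟨hfourth, ?_⟩
  have hlogconvex := integral_abs_sq_pow_three_le (memLp_finsetSum univ fun i _ ↦ hL4_scaled i)
  set A := ∫ ω, |∑ i, a i * X i ω| ^ 2 ∂P
  set B := ∫ ω, |∑ i, a i * X i ω| ∂P
  have hcube : A ^ 2 * A ≤ A ^ 2 * (3 * B ^ 2) := by
    linear_combination hlogconvex + B ^ 2 * hfourth
  have hA : 0 ≤ A := integral_nonneg fun ω ↦ by positivity
  rcases hA.eq_or_lt with hA0 | hApos
  · rw [← hA0]
    positivity
  · exact le_of_mul_le_mul_left hcube (by positivity)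

/-- Khinchine-type inequality: if `X₁, …, Xₙ` are independent mean-zero random variables with
`E[Xᵢ⁴] ≤ 3 E[Xᵢ²]²`, then for any scalars `aᵢ`, setting `Z = |∑ aᵢ Xᵢ|`, we have
`E[Z⁴] ≤ 3 E[Z²]²` and `E[Z²] ≤ 3 E[Z]²`. -/
theorem khinchine_type_inequality {Ω : Type*} [MeasurableSpace Ω] (P : Measure Ω)
    [IsProbabilityMeasure P] {n : ℕ} (X : Fin n → Ω → ℝ)
    (hX : ∀ i, Measurable (X i))
    (hindep : iIndepFun X P)
    (hL4 : ∀ i, MemLp (X i) 4 P)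
    (hmean : ∀ i, ∫ ω, X i ω ∂P = 0)
    (hkurt : ∀ i, ∫ ω, (X i ω) ^ 4 ∂P ≤ 3 * (∫ ω, (X i ω) ^ 2 ∂P) ^ 2)
    (a : Fin n → ℝ) :
    (∫ ω, |∑ i, a i * X i ω| ^ 4 ∂P ≤ 3 * (∫ ω, |∑ i, a i * X i ω| ^ 2 ∂P) ^ 2) ∧
      ∫ ω, |∑ i, a i * X i ω| ^ 2 ∂P ≤ 3 * (∫ ω, |∑ i, a i * X i ω| ∂P) ^ 2 :=
  khinchine_type_inequality_general P X hindep hL4 hmean hkurt a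
end

section
/- Let c = (c_1,...,c_n) where the c_i are i.i.d. standard Gaussian. For every α ∈ [0, 2√(ln 2)] and β ∈ [1/2,1] with H(β) ≤ α²/4 (H being natural-log binary entropy), Pr[ max over x ∈ {0,1}^n with ‖x‖₁ ≥ βn of cᵀx ≥ αn ] ≤ exp(−α²n/4). -/
/-!
Each `x ∈ {0,1}ⁿ` is the indicator of a set `S` with `cᵀx = ∑_{i ∈ S} cᵢ`, a centred Gaussian of
variance `#S ≤ n`; the Chernoff bound at `t = α` bounds its upper tail at `αn` by
`exp (-α²n + #S α²/2) ≤ exp (-α²n/2)`. Since `β ≥ 1/2`, the sets with `#S ≥ βn` number at most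
`exp (n H(β)) ≤ exp (α²n/4)`: each has weight `β^#S (1-β)^(n-#S) ≥ exp (-n H(β))` under the
`β`-biased product measure. A union bound finishes the proof.
-/

open MeasureTheory ProbabilityTheory Real Finset
open scoped NNReal

namespace ProbabilityTheory.HasSubgaussianMGF

variable {Ω : Type*} {mΩ : MeasurableSpace Ω} {μ : Measure Ω} {X : Ω → ℝ} {c : ℝ≥0}

lemma measure_ge_le_exp_add (h : HasSubgaussianMGF X c μ) (ε : ℝ) {t : ℝ} (ht : 0 ≤ t) :
    μ.real {ω | ε ≤ X ω} ≤ exp (-t * ε + c * t ^ 2 / 2) := by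
  rw [HasSubgaussianMGF_iff_kernel] at h
  have h_kernel := h.measure_ge_le_exp_add ε
  simp only [ae_dirac_eq, Filter.eventually_pure, Kernel.const_apply] at h_kernel
  exact h_kernel t ht

end ProbabilityTheory.HasSubgaussianMGF

lemma hasSubgaussianMGF_id_gaussianReal (v : ℝ≥0) :
    HasSubgaussianMGF id v (gaussianReal 0 v) where
  integrable_exp_mul := integrable_exp_mul_gaussianReal
  mgf_le t := by simp [mgf_id_gaussianReal]

lemma hasSubgaussianMGF_sum_pi_gaussianReal {ι : Type*} [Fintype ι] (v : ℝ≥0) (s : Finset ι) :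
    HasSubgaussianMGF (fun c : ι → ℝ ↦ ∑ i ∈ s, c i) (#s * v)
      (Measure.pi fun _ ↦ gaussianReal 0 v) := by
  have h_eval (i : ι) : HasSubgaussianMGF (fun c : ι → ℝ ↦ c i) v
      (Measure.pi fun _ ↦ gaussianReal 0 v) := by
    rw [← HasSubgaussianMGF.id_map_iff (measurable_pi_apply i).aemeasurable,
      (measurePreserving_eval _ i).map_eq]
    exact hasSubgaussianMGF_id_gaussianReal v
  simpa using HasSubgaussianMGF.sum_of_iIndepFun
    (iIndepFun_pi (X := fun _ ↦ id) fun _ ↦ aemeasurable_id) fun i _ ↦ h_eval i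

lemma exp_neg_mul_binEntropy_le_pow_mul_pow {β : ℝ} {n k : ℕ} (hβ0 : 1 / 2 ≤ β) (hβ1 : β ≤ 1)
    (hk : β * n ≤ k) (hkn : k ≤ n) :
    exp (-(n * binEntropy β)) ≤ β ^ k * (1 - β) ^ (n - k) := by
  rcases hβ1.eq_or_lt with rfl | hβ1
  · obtain rfl : k = n := le_antisymm hkn (by exact_mod_cast (one_mul (n : ℝ)) ▸ hk)
    simp
  have hβ : 0 < β := by linarith
  have h1β : 0 < 1 - β := by linarith
  rw [← exp_log (by positivity : 0 < β ^ k * (1 - β) ^ (n - k)), exp_le_exp,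
    log_mul (by positivity) (by positivity), log_pow, log_pow, Nat.cast_sub hkn]
  -- the exponent is `-n H(β) + (k - βn) log (β / (1 - β))`, and both factors are nonnegative
  have hlog : log (1 - β) ≤ log β := log_le_log h1β (by linarith)
  have : 0 ≤ (k - β * n) * (log β - log (1 - β)) := mul_nonneg (by linarith) (by linarith)
  simp only [binEntropy, log_inv]
  nlinarith

lemma card_filter_le_card_le_exp_binEntropy {ι : Type*} [Fintype ι] {β : ℝ}
    (hβ0 : 1 / 2 ≤ β) (hβ1 : β ≤ 1) :
    (#{S : Finset ι | β * Fintype.card ι ≤ #S} : ℝ) ≤ exp (Fintype.card ι * binEntropy β) := by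
  set n := Fintype.card ι
  suffices #{S : Finset ι | β * n ≤ #S} * exp (-(n * binEntropy β)) ≤ 1 by
    rwa [exp_neg, ← div_eq_mul_inv, div_le_one (exp_pos _)] at this
  calc #{S : Finset ι | β * n ≤ #S} * exp (-(n * binEntropy β))
      = ∑ S : Finset ι with β * n ≤ #S, exp (-(n * binEntropy β)) := by
        rw [sum_const, nsmul_eq_mul]
    _ ≤ ∑ S : Finset ι with β * n ≤ #S, β ^ #S * (1 - β) ^ (n - #S) :=
        sum_le_sum fun S hS ↦ exp_neg_mul_binEntropy_le_pow_mul_pow hβ0 hβ1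
          (mem_filter.1 hS).2 (card_le_univ S)
    _ ≤ ∑ S : Finset ι, β ^ #S * (1 - β) ^ (n - #S) :=
        sum_le_sum_of_subset_of_nonneg (filter_subset _ _) fun S _ _ ↦ by
          have : 0 ≤ 1 - β := by linarith
          have : 0 ≤ β := by linarith
          positivity
    _ = 1 := by rw [Fintype.sum_pow_mul_eq_add_pow, add_sub_cancel, one_pow]

lemma sum_mul_eq_sum_filter_eq_one {ι : Type*} [Fintype ι] {x : ι → ℝ}
    (hx : ∀ i, x i = 0 ∨ x i = 1) (c : ι → ℝ) :
    ∑ i, c i * x i = ∑ i with x i = 1, c i := by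
  rw [sum_filter]
  exact sum_congr rfl fun i _ ↦ by rcases hx i with h | h <;> simp [h]

theorem gaussian_cube_max_bound_general (n : ℕ) (α β : ℝ)
    (hα0 : 0 ≤ α)
    (hβ0 : 1 / 2 ≤ β) (hβ1 : β ≤ 1)
    (hH : Real.binEntropy β ≤ α ^ 2 / 4) :
    (Measure.pi fun _ : Fin n => gaussianReal 0 1)
        {c | ∃ x : Fin n → ℝ, (∀ i, x i = 0 ∨ x i = 1) ∧
          β * n ≤ ∑ i, |x i| ∧ α * n ≤ ∑ i, c i * x i} ≤
      ENNReal.ofReal (Real.exp (-(α ^ 2 * n) / 4)) := by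
  set μ := Measure.pi fun _ : Fin n => gaussianReal 0 1
  set T : Finset (Finset (Fin n)) := {S | β * n ≤ #S}
  have h_cover : {c : Fin n → ℝ | ∃ x : Fin n → ℝ, (∀ i, x i = 0 ∨ x i = 1) ∧
      β * n ≤ ∑ i, |x i| ∧ α * n ≤ ∑ i, c i * x i} ⊆
      ⋃ S ∈ T, {c | α * n ≤ ∑ i ∈ S, c i} := by
    rintro c ⟨x, hx, hβx, hαx⟩
    have h_card : ∑ i, |x i| = #{i | x i = 1} := by
      rw [← sum_boole]
      exact sum_congr rfl fun i _ ↦ by rcases hx i with h | h <;> simp [h]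
    rw [sum_mul_eq_sum_filter_eq_one hx] at hαx
    exact Set.mem_biUnion (by simpa [T, h_card] using hβx) hαx
  have h_tail (S : Finset (Fin n)) :
      μ.real {c | α * n ≤ ∑ i ∈ S, c i} ≤ exp (-(α ^ 2 * n) / 2) := by
    refine ((hasSubgaussianMGF_sum_pi_gaussianReal 1 S).measure_ge_le_exp_add _ hα0).trans ?_
    have : (#S : ℝ) ≤ n := by exact_mod_cast (card_le_univ S).trans_eq (Fintype.card_fin n)
    rw [exp_le_exp]
    push_cast
    nlinarith [sq_nonneg α]
  rw [← ofReal_measureReal]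
  refine ENNReal.ofReal_le_ofReal ?_
  calc μ.real _ ≤ ∑ S ∈ T, μ.real {c | α * n ≤ ∑ i ∈ S, c i} :=
        (measureReal_mono h_cover (measure_ne_top _ _)).trans (measureReal_biUnion_finset_le _ _)
    _ ≤ #T * exp (-(α ^ 2 * n) / 2) := by simpa using sum_le_sum fun S _ ↦ h_tail S
    _ ≤ exp (n * binEntropy β) * exp (-(α ^ 2 * n) / 2) := by
        gcongr
        simpa using card_filter_le_card_le_exp_binEntropy (ι := Fin n) hβ0 hβ1
    _ ≤ exp (-(α ^ 2 * n) / 4) := by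
        rw [← exp_add, exp_le_exp]
        nlinarith [(n.cast_nonneg : (0 : ℝ) ≤ n)]

/-- For a standard Gaussian vector `c ∈ ℝⁿ`, `α ∈ [0, 2√(ln 2)]` and `β ∈ [1/2, 1]` with
`H(β) ≤ α²/4`, the probability that some `x ∈ {0,1}ⁿ` with `‖x‖₁ ≥ β n` satisfies
`cᵀx ≥ α n` is at most `exp (−α² n / 4)`. -/
theorem gaussian_cube_max_bound (n : ℕ) (α β : ℝ)
    (hα0 : 0 ≤ α) (hα1 : α ≤ 2 * Real.sqrt (Real.log 2))
    (hβ0 : 1 / 2 ≤ β) (hβ1 : β ≤ 1)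
    (hH : Real.binEntropy β ≤ α ^ 2 / 4) :
    (Measure.pi fun _ : Fin n => gaussianReal 0 1)
        {c | ∃ x : Fin n → ℝ, (∀ i, x i = 0 ∨ x i = 1) ∧
          β * n ≤ ∑ i, |x i| ∧ α * n ≤ ∑ i, c i * x i} ≤
      ENNReal.ofReal (Real.exp (-(α ^ 2 * n) / 4)) :=
  gaussian_cube_max_bound_general n α β hα0 hβ0 hβ1 hH
end

section
/- Let X be a real random variable with mean μ, variance σ², and a density ρ satisfying ρ(x) ≤ C/σ for all x, where C > 0. Then for every ε > 0, with δ = ε²/(12C), Pr[ dist(X, ℤ) ≥ δ·min(1, σ) ] ≥ 1 − ε, where dist(x, ℤ) = min over z ∈ ℤ of |x − z|. -/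
/-!
Let `ν` be the law of `X` and `E` the `δ`-neighbourhood of `ℤ`. Pointwise
`1 ≤ ((x - μ) / R)² + (1 - ((x - μ) / R)²)₊`, so
`ν E ≤ σ² / R² + (C / σ) ∫_E (1 - ((x - μ) / R)²)₊ dx`. Periodizing over `ℤ`, the last integral
is at most `2δ` times a sum of the bump over a translate of `ℤ`, and by a layer-cake argument such
a lattice sum of a quasiconcave function is at most its integral `4R/3` plus its maximum `1`.
With `R = 2σ/ε` this gives `ν E ≤ ε²/4 + ε²/6 + 4ε/9 ≤ ε`.
-/

open MeasureTheory ProbabilityTheory Set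
open scoped ENNReal

theorem Finset.card_le_volume_add_one_of_ordConnected {S : Set ℝ} (hS : S.OrdConnected)
    {F : Finset ℤ} (hF : ∀ z ∈ F, (z : ℝ) ∈ S) : (F.card : ℝ≥0∞) ≤ volume S + 1 := by
  rcases F.eq_empty_or_nonempty with rfl | hne
  · simp
  set a := F.min' hne
  set b := F.max' hne
  have hab : a ≤ b := F.min'_le_max' hne
  have hcard : F.card ≤ (b + 1 - a).toNat :=
    (Finset.card_le_card fun z hz => Finset.mem_Icc.2 ⟨F.min'_le z hz, F.le_max' z hz⟩).trans
      (Int.card_Icc a b).le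
  have hvol : ENNReal.ofReal (b - a) ≤ volume S := by
    rw [← Real.volume_Icc]
    exact measure_mono (hS.out (hF a (F.min'_mem hne)) (hF b (F.max'_mem hne)))
  calc (F.card : ℝ≥0∞) ≤ ((b + 1 - a).toNat : ℝ≥0∞) := by exact_mod_cast hcard
    _ = ENNReal.ofReal (b - a) + 1 := by
      rw [← ENNReal.ofReal_natCast, ← ENNReal.ofReal_one,
        ← ENNReal.ofReal_add (sub_nonneg.2 (Int.cast_le.2 hab)) zero_le_one]
      congr 1
      rw [show ((b + 1 - a).toNat : ℝ) = ((b + 1 - a : ℤ) : ℝ) by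
        exact_mod_cast Int.toNat_of_nonneg (by omega)]
      push_cast
      ring
    _ ≤ volume S + 1 := by gcongr

theorem count_intCast_preimage_le_volume_add_one {S : Set ℝ} (hS : S.OrdConnected) :
    Measure.count (((↑) : ℤ → ℝ) ⁻¹' S) ≤ volume S + 1 := by
  rw [Measure.count_apply .of_discrete]
  by_cases hT : (((↑) : ℤ → ℝ) ⁻¹' S).Finite
  · rw [hT.encard_eq_coe_toFinset_card]
    exact_mod_cast Finset.card_le_volume_add_one_of_ordConnected hS fun z hz => by simpa using hz
  · rw [Set.Infinite.encard_eq hT]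
    refine (ENNReal.eq_top_of_forall_nnreal_le fun r => ?_).ge
    obtain ⟨n, hn⟩ := exists_nat_ge r
    obtain ⟨F, hFT, rfl⟩ := Set.Infinite.exists_subset_card_eq hT n
    calc (r : ℝ≥0∞) ≤ F.card := by exact_mod_cast hn
      _ ≤ volume S + 1 := Finset.card_le_volume_add_one_of_ordConnected hS fun z hz => hFT hz

/-- Layer cake on both sides: each superlevel set is an interval, which contains at most one
more integer point than its length. -/
theorem tsum_ofReal_intCast_le_lintegral_add {g : ℝ → ℝ} (hg : Measurable g)
    (hqc : QuasiconcaveOn ℝ univ g) {M : ℝ} (hM : ∀ x, g x ≤ M) :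
    ∑' z : ℤ, ENNReal.ofReal (g z) ≤ (∫⁻ x, ENNReal.ofReal (g x)) + ENNReal.ofReal M := by
  set gp : ℝ → ℝ := fun x => max (g x) 0
  have hgp0 : ∀ x, 0 ≤ gp x := fun x => le_max_right _ _
  have hgp : ∀ x, ENNReal.ofReal (gp x) = ENNReal.ofReal (g x) := fun x => by simp [gp]
  have hsuper : ∀ t > 0, {x | t ≤ gp x} = {x | t ≤ g x} := fun t ht => by
    ext x
    simp [gp, not_le.2 ht]
  have hM' : ∫⁻ t in Ioi 0, (Iic M).indicator 1 t = ENNReal.ofReal M := by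
    rw [lintegral_indicator_one measurableSet_Iic, Measure.restrict_apply measurableSet_Iic,
      Iic_inter_Ioi, Real.volume_Ioc, sub_zero]
  calc ∑' z : ℤ, ENNReal.ofReal (g z)
      = ∫⁻ t in Ioi 0, Measure.count {z : ℤ | t ≤ gp z} := by
        rw [← lintegral_eq_lintegral_meas_le (f := fun z : ℤ => gp z) _
          (ae_of_all _ fun _ => hgp0 _) (measurable_of_countable _).aemeasurable, lintegral_count]
        simp only [hgp]
    _ ≤ ∫⁻ t in Ioi 0, (volume {x | t ≤ gp x} + (Iic M).indicator 1 t) := by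
        refine setLIntegral_mono' measurableSet_Ioi fun t ht => ?_
        change Measure.count (((↑) : ℤ → ℝ) ⁻¹' {x | t ≤ gp x}) ≤ _
        rw [hsuper t ht]
        by_cases htM : t ≤ M
        · rw [indicator_of_mem (show t ∈ Iic M from htM), Pi.one_apply]
          exact count_intCast_preimage_le_volume_add_one (by simpa using (hqc t).ordConnected)
        · have : {x | t ≤ g x} = ∅ :=
            eq_empty_of_forall_notMem fun x hx => htM (le_trans hx (hM x))
          simp [this]
    _ = (∫⁻ x, ENNReal.ofReal (g x)) + ENNReal.ofReal M := by
        rw [lintegral_add_right _ (measurable_one.indicator measurableSet_Iic), hM',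
          ← lintegral_eq_lintegral_meas_le _ (ae_of_all _ hgp0)
            (hg.max measurable_const).aemeasurable]
        simp only [hgp]

theorem setLIntegral_iUnion_ball_intCast_le {f : ℝ → ℝ≥0∞} (hf : Measurable f) {K : ℝ≥0∞}
    (hK : ∀ y, ∑' z : ℤ, f (z + y) ≤ K) (δ : ℝ) :
    ∫⁻ x in ⋃ z : ℤ, Metric.ball (z : ℝ) δ, f x ≤ ENNReal.ofReal (2 * δ) * K :=
  calc ∫⁻ x in ⋃ z : ℤ, Metric.ball (z : ℝ) δ, f x
      ≤ ∑' z : ℤ, ∫⁻ x in Metric.ball (z : ℝ) δ, f x := lintegral_iUnion_le _ _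
    _ = ∑' z : ℤ, ∫⁻ y in Metric.ball 0 δ, f (z + y) := by
      refine tsum_congr fun z => ?_
      rw [← (measurePreserving_add_left volume (z : ℝ)).setLIntegral_comp_preimage
        Metric.isOpen_ball.measurableSet hf, Metric.preimage_add_left_ball, neg_add_cancel]
    _ = ∫⁻ y in Metric.ball 0 δ, ∑' z : ℤ, f (z + y) :=
      (lintegral_tsum fun z => (hf.comp (measurable_const_add _)).aemeasurable).symm
    _ ≤ ∫⁻ _ in Metric.ball 0 δ, K := lintegral_mono fun y => hK y
    _ = ENNReal.ofReal (2 * δ) * K := by rw [setLIntegral_const, Real.volume_ball, mul_comm]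

theorem concaveOn_one_sub_sq_div (c R : ℝ) :
    ConcaveOn ℝ univ fun x => 1 - ((x - c) / R) ^ 2 := by
  refine ⟨convex_univ, fun x _ y _ a b ha hb hab => ?_⟩
  obtain rfl : b = 1 - a := by linarith
  have hmix : (a * x + (1 - a) * y - c) / R = a * ((x - c) / R) + (1 - a) * ((y - c) / R) := by
    ring
  simp only [smul_eq_mul, hmix]
  nlinarith [mul_nonneg (mul_nonneg ha hb) (sq_nonneg ((x - c) / R - (y - c) / R))]

theorem lintegral_ofReal_one_sub_sq_div (c : ℝ) {R : ℝ} (hR : 0 < R) :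
    ∫⁻ x, ENNReal.ofReal (1 - ((x - c) / R) ^ 2) = ENNReal.ofReal (4 * R / 3) := by
  have hle_one : ∀ x, ((x - c) / R) ^ 2 ≤ 1 ↔ x ∈ Icc (c - R) (c + R) := fun x => by
    rw [sq_le_one_iff_abs_le_one, abs_le, le_div_iff₀ hR, div_le_iff₀ hR, mem_Icc]
    constructor <;> rintro ⟨h₁, h₂⟩ <;> constructor <;> linarith
  have hsupp : ∀ x ∉ Icc (c - R) (c + R), ENNReal.ofReal (1 - ((x - c) / R) ^ 2) = 0 :=
    fun x hx => ENNReal.ofReal_of_nonpos (sub_nonpos.2 (not_le.1 (mt (hle_one x).1 hx)).le)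
  have hint : ∫ x in (c - R)..(c + R), (1 - ((x - c) / R) ^ 2) = 4 * R / 3 := by
    rw [intervalIntegral.integral_comp_sub_right (fun x => 1 - (x / R) ^ 2)]
    simp only [add_sub_cancel_left, div_pow]
    rw [intervalIntegral.integral_sub intervalIntegrable_const
      (((continuous_pow 2).div_const _).intervalIntegrable _ _), intervalIntegral.integral_div,
      integral_pow, integral_one]
    field_simp
    ring
  rw [← setLIntegral_eq_of_support_subset (Function.support_subset_iff'.2 hsupp),
    ← ofReal_integral_eq_lintegral_ofReal (by fun_prop : Continuous _).integrableOn_Icc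
      ((ae_restrict_iff' measurableSet_Icc).2
        (ae_of_all _ fun x hx => sub_nonneg.2 ((hle_one x).2 hx))),
    integral_Icc_eq_integral_Ioc, ← intervalIntegral.integral_of_le (by linarith), hint]

theorem setLIntegral_iUnion_ball_ofReal_one_sub_sq_div_le (c : ℝ) {R : ℝ} (hR : 0 < R) (δ : ℝ) :
    ∫⁻ x in ⋃ z : ℤ, Metric.ball (z : ℝ) δ, ENNReal.ofReal (1 - ((x - c) / R) ^ 2) ≤
      ENNReal.ofReal (2 * δ) * ENNReal.ofReal (4 * R / 3 + 1) := by
  refine setLIntegral_iUnion_ball_intCast_le (by fun_prop) (fun y => ?_) δ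
  have := tsum_ofReal_intCast_le_lintegral_add (by fun_prop)
    (concaveOn_one_sub_sq_div (c - y) R).quasiconcaveOn (M := 1)
    fun x => sub_le_self _ (sq_nonneg _)
  rw [lintegral_ofReal_one_sub_sq_div _ hR, ← ENNReal.ofReal_add (by positivity) zero_le_one]
    at this
  simpa only [sub_sub_eq_add_sub] using this

theorem measure_le_lintegral_add_setLIntegral_one_sub {α : Type*} [MeasurableSpace α]
    (ν : Measure α) {φ : α → ℝ} (hφ : Measurable φ) (E : Set α) :
    ν E ≤ (∫⁻ x, ENNReal.ofReal (φ x) ∂ν) + ∫⁻ x in E, ENNReal.ofReal (1 - φ x) ∂ν :=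
  calc ν E = ∫⁻ _ in E, 1 ∂ν := (setLIntegral_one E).symm
    _ ≤ ∫⁻ x in E, (ENNReal.ofReal (φ x) + ENNReal.ofReal (1 - φ x)) ∂ν :=
      lintegral_mono fun x =>
        (by simp : (1 : ℝ≥0∞) = ENNReal.ofReal (φ x + (1 - φ x))).trans_le ENNReal.ofReal_add_le
    _ = (∫⁻ x in E, ENNReal.ofReal (φ x) ∂ν) + ∫⁻ x in E, ENNReal.ofReal (1 - φ x) ∂ν :=
      lintegral_add_left hφ.ennreal_ofReal _
    _ ≤ _ := by gcongr; exact Measure.restrict_le_self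

theorem lintegral_map_ofReal_sq_sub_integral_eq_variance {Ω : Type*} [MeasurableSpace Ω]
    {P : Measure Ω} {X : Ω → ℝ} (hX : AEMeasurable X P) (hvar : evariance X P ≠ ∞) :
    ∫⁻ x, ENNReal.ofReal ((x - P[X]) ^ 2) ∂(P.map X) = ENNReal.ofReal (variance X P) := by
  rw [lintegral_map' (by fun_prop) hX, ← evariance_eq_lintegral_ofReal, variance,
    ENNReal.ofReal_toReal hvar]

theorem measure_iUnion_ball_intCast_le {ν : Measure ℝ} {K : ℝ≥0∞} (hν : ν ≤ K • volume) (c : ℝ)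
    {R : ℝ} (hR : 0 < R) (δ : ℝ) :
    ν (⋃ z : ℤ, Metric.ball (z : ℝ) δ) ≤
      (∫⁻ x, ENNReal.ofReal ((x - c) ^ 2) ∂ν) / ENNReal.ofReal (R ^ 2) +
        K * (ENNReal.ofReal (2 * δ) * ENNReal.ofReal (4 * R / 3 + 1)) := by
  refine (measure_le_lintegral_add_setLIntegral_one_sub ν (φ := fun x => ((x - c) / R) ^ 2)
    (by fun_prop) _).trans (add_le_add (le_of_eq ?_) ?_)
  · simp_rw [div_pow, ENNReal.ofReal_div_of_pos (by positivity : 0 < R ^ 2), div_eq_mul_inv]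
    exact lintegral_mul_const _ (by fun_prop)
  · calc _ ≤ ∫⁻ x in ⋃ z : ℤ, Metric.ball (z : ℝ) δ, ENNReal.ofReal (1 - ((x - c) / R) ^ 2)
          ∂(K • volume) := lintegral_mono' (Measure.restrict_mono subset_rfl hν) le_rfl
      _ ≤ _ := by
        rw [Measure.restrict_smul, lintegral_smul_measure, smul_eq_mul]
        gcongr
        exact setLIntegral_iUnion_ball_ofReal_one_sub_sq_div_le c hR δ

theorem anticoncentration_error_le {σ C ε m : ℝ} (hσ : 0 < σ) (hC : 0 < C) (hε : 0 < ε)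
    (hε1 : ε ≤ 1) (hm1 : m ≤ 1) (hmσ : m ≤ σ) :
    σ ^ 2 / (2 * σ / ε) ^ 2 +
      C / σ * (2 * (ε ^ 2 / (12 * C) * m) * (4 * (2 * σ / ε) / 3 + 1)) ≤ ε := by
  have h₁ : σ ^ 2 / (2 * σ / ε) ^ 2 = ε ^ 2 / 4 := by
    field_simp
    ring
  have h₂ : C / σ * (2 * (ε ^ 2 / (12 * C) * m) * (4 * (2 * σ / ε) / 3 + 1)) =
      4 / 9 * ε * m + ε ^ 2 / 6 * (m / σ) := by
    field_simp
    ring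
  rw [h₁, h₂]
  nlinarith [mul_le_mul_of_nonneg_left ((div_le_one hσ).2 hmσ) (by positivity : 0 ≤ ε ^ 2 / 6)]

theorem anticoncentration_of_bounded_density_general {Ω : Type*} [MeasurableSpace Ω]
    (P : Measure Ω) [IsProbabilityMeasure P] (X : Ω → ℝ) (hX : Measurable X)
    (μ σ C : ℝ) (hσ : 0 < σ) (hC : 0 < C)
    (hmean : ∫ ω, X ω ∂P = μ) (hvar : variance X P = σ ^ 2)
    (ρ : ℝ → ℝ)
    (hdens : P.map X = volume.withDensity (fun t => ENNReal.ofReal (ρ t)))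
    (hbdd : ∀ t, ρ t ≤ C / σ)
    (ε : ℝ) (hε : 0 < ε) :
    ENNReal.ofReal (1 - ε) ≤
      P {ω | ∀ z : ℤ, ε ^ 2 / (12 * C) * min 1 σ ≤ |X ω - z|} := by
  rcases le_or_gt 1 ε with hε1 | hε1
  · simp [ENNReal.ofReal_of_nonpos (sub_nonpos.2 hε1)]
  set δ := ε ^ 2 / (12 * C) * min 1 σ
  set E := ⋃ z : ℤ, Metric.ball (z : ℝ) δ
  have hE : MeasurableSet E := MeasurableSet.iUnion fun _ => measurableSet_ball
  have hgood : {ω | ∀ z : ℤ, δ ≤ |X ω - z|} = X ⁻¹' Eᶜ := by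
    ext ω
    simp [E, Real.dist_eq]
  have hdensity : P.map X ≤ ENNReal.ofReal (C / σ) • volume := by
    rw [hdens, ← withDensity_const]
    exact withDensity_mono (ae_of_all _ fun t => ENNReal.ofReal_le_ofReal (hbdd t))
  have hsecond : ∫⁻ x, ENNReal.ofReal ((x - μ) ^ 2) ∂(P.map X) = ENNReal.ofReal (σ ^ 2) := by
    rw [← hmean, ← hvar]
    exact lintegral_map_ofReal_sq_sub_integral_eq_variance hX.aemeasurable
      (ENNReal.toReal_pos_iff.1 (show 0 < variance X P by rw [hvar]; positivity)).2.ne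
  have hbad : P.map X E ≤ ENNReal.ofReal ε := by
    refine (measure_iUnion_ball_intCast_le hdensity μ (by positivity : 0 < 2 * σ / ε) δ).trans ?_
    rw [hsecond, ← ENNReal.ofReal_div_of_pos (by positivity), ← ENNReal.ofReal_mul (by positivity),
      ← ENNReal.ofReal_mul (by positivity), ← ENNReal.ofReal_add (by positivity) (by positivity)]
    exact ENNReal.ofReal_le_ofReal (anticoncentration_error_le hσ hC hε hε1.le
      (min_le_left _ _) (min_le_right _ _))
  rw [hgood, preimage_compl, measure_compl (hX hE) (measure_ne_top _ _), measure_univ,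
    ← Measure.map_apply hX hE, ENNReal.ofReal_sub _ hε.le, ENNReal.ofReal_one]
  exact tsub_le_tsub_left hbad 1

/-- If `X` has mean `μ`, variance `σ²` and a density bounded by `C/σ`, then for every
`ε > 0`, with `δ = ε²/(12C)`, the distance from `X` to the nearest integer is at least
`δ · min 1 σ` with probability at least `1 − ε`. -/
theorem anticoncentration_of_bounded_density {Ω : Type*} [MeasurableSpace Ω]
    (P : Measure Ω) [IsProbabilityMeasure P] (X : Ω → ℝ) (hX : Measurable X)
    (μ σ C : ℝ) (hσ : 0 < σ) (hC : 0 < C)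
    (hmean : ∫ ω, X ω ∂P = μ) (hvar : variance X P = σ ^ 2)
    (ρ : ℝ → ℝ) (hρ : ∀ t, 0 ≤ ρ t)
    (hdens : P.map X = volume.withDensity (fun t => ENNReal.ofReal (ρ t)))
    (hbdd : ∀ t, ρ t ≤ C / σ)
    (ε : ℝ) (hε : 0 < ε) :
    ENNReal.ofReal (1 - ε) ≤
      P {ω | ∀ z : ℤ, ε ^ 2 / (12 * C) * min 1 σ ≤ |X ω - z|} :=
  anticoncentration_of_bounded_density_general P X hX μ σ C hσ hC hmean hvar ρ hdens hbdd ε hε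
end

section
/- Let f(x) = arctan( p·sin(2πx) / (p·cos(2πx) + (1−p)) ) for 0 < p ≤ 0.1. Then f(0) = 0, f'(0) = 2πp, f''(0) = 0, and for all x, |f(x) − 2πp·x| ≤ 50·p·|x|³. -/
/-!
With `θ = 2πx`, `f` is the argument of `p e^{iθ} + (1 - p)`, so
`f' = 2πp (p + (1 - p) cos θ) / D` where `D = |p e^{iθ} + (1 - p)|² ≥ (1 - 2p)²`, and
`f' - 2πp = -2πp (1 - p)(1 - 2p)(1 - cos θ) / D`. Hence `f'` is maximal at `0`, so `f''(0) = 0`,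
and `|f' - 2πp| ≤ (9/2) π³ p x²` because `1 - cos θ ≤ θ² / 2`; integrating from `0` gives the
cubic bound with constant `(3/2) π³ < 50`.
-/

open Real

theorem HasDerivAt.arctan_div {f g : ℝ → ℝ} {f' g' x : ℝ} (hf : HasDerivAt f f' x)
    (hg : HasDerivAt g g' x) (hx : g x ≠ 0) :
    HasDerivAt (fun y => Real.arctan (f y / g y)) ((f' * g x - f x * g') / (f x ^ 2 + g x ^ 2)) x := by
  refine (hf.div hg hx).arctan.congr_deriv ?_
  simp only [Pi.div_apply]
  field_simp
  ring

/-- `C t³ / 3 ∓ h t` are monotone, their derivatives `C t² ∓ h' t` being nonnegative. -/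
theorem abs_le_of_hasDerivAt_of_abs_le_mul_sq {h h' : ℝ → ℝ} {C : ℝ}
    (hd : ∀ t, HasDerivAt h (h' t) t) (hb : ∀ t, |h' t| ≤ C * t ^ 2) (h0 : h 0 = 0) (x : ℝ) :
    |h x| ≤ C / 3 * |x| ^ 3 := by
  have cube : ∀ t, HasDerivAt (fun t : ℝ => C / 3 * t ^ 3) (C * t ^ 2) t := fun t =>
    ((hasDerivAt_pow 3 t).const_mul (C / 3)).congr_deriv (by norm_num; ring)
  have upper : Monotone fun t => C / 3 * t ^ 3 - h t := by
    have hsub : ∀ t, HasDerivAt (fun t => C / 3 * t ^ 3 - h t) (C * t ^ 2 - h' t) t :=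
      fun t => (cube t).sub (hd t)
    refine monotone_of_deriv_nonneg (fun t => (hsub t).differentiableAt) fun t => ?_
    rw [(hsub t).deriv]
    linarith [(abs_le.mp (hb t)).2]
  have lower : Monotone fun t => C / 3 * t ^ 3 + h t := by
    have hadd : ∀ t, HasDerivAt (fun t => C / 3 * t ^ 3 + h t) (C * t ^ 2 + h' t) t :=
      fun t => (cube t).add (hd t)
    refine monotone_of_deriv_nonneg (fun t => (hadd t).differentiableAt) fun t => ?_
    rw [(hadd t).deriv]
    linarith [(abs_le.mp (hb t)).1]
  rcases le_or_gt 0 x with hx | hx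
  · have h₁ := upper hx
    have h₂ := lower hx
    simp only [h0] at h₁ h₂
    rw [abs_le, abs_of_nonneg hx]
    constructor <;> linarith
  · have h₁ := upper hx.le
    have h₂ := lower hx.le
    simp only [h0] at h₁ h₂
    rw [abs_le, abs_of_neg hx, neg_pow, show (-1 : ℝ) ^ 3 = -1 by norm_num]
    constructor <;> linarith

namespace BernoulliPhase

noncomputable def phase (p x : ℝ) : ℝ :=
  arctan (p * sin (2 * π * x) / (p * cos (2 * π * x) + (1 - p)))

noncomputable def phaseDeriv (p x : ℝ) : ℝ :=
  2 * π * p * (p + (1 - p) * cos (2 * π * x)) /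
    (p ^ 2 + (1 - p) ^ 2 + 2 * p * (1 - p) * cos (2 * π * x))

variable {p : ℝ}

theorem phase_zero (p : ℝ) : phase p 0 = 0 := by
  simp [phase]

theorem phaseDeriv_zero (p : ℝ) : phaseDeriv p 0 = 2 * π * p := by
  simp only [phaseDeriv, mul_zero, cos_zero]
  field_simp
  ring

theorem mul_cos_add_one_sub_pos (hp : p < 1 / 2) (θ : ℝ) : 0 < p * cos θ + (1 - p) := by
  rcases le_or_gt 0 p with hp0 | hp0
  · nlinarith [mul_nonneg hp0 (neg_le_iff_add_nonneg.mp (neg_one_le_cos θ))]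
  · nlinarith [mul_nonpos_of_nonpos_of_nonneg hp0.le (sub_nonneg.mpr (cos_le_one θ))]

theorem hasDerivAt_phase (hp : p < 1 / 2) (x : ℝ) : HasDerivAt (phase p) (phaseDeriv p x) x := by
  have hθ : HasDerivAt (fun y : ℝ => 2 * π * y) (2 * π * 1) x := (hasDerivAt_id x).const_mul _
  have hsin := hθ.sin.const_mul p
  have hcos := (hθ.cos.const_mul p).add_const (1 - p)
  refine (hsin.arctan_div hcos (mul_cos_add_one_sub_pos hp _).ne').congr_deriv ?_
  have pythagoras := sin_sq_add_cos_sq (2 * π * x)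
  rw [phaseDeriv]
  congr 1
  · linear_combination (2 * π * p ^ 2) * pythagoras
  · linear_combination p ^ 2 * pythagoras

/-- The right side is `|p e^{iθ} + (1 - p)|² = (1 - 2p)² + 2p(1 - p)(1 + cos θ)`. -/
theorem sq_one_sub_two_mul_le_phaseDenom (hp0 : 0 ≤ p) (hp1 : p ≤ 1) (x : ℝ) :
    (1 - 2 * p) ^ 2 ≤ p ^ 2 + (1 - p) ^ 2 + 2 * p * (1 - p) * cos (2 * π * x) := by
  have : 0 ≤ 2 * p * (1 - p) * (1 + cos (2 * π * x)) :=
    mul_nonneg (by nlinarith) (by linarith [neg_one_le_cos (2 * π * x)])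
  linarith

theorem phaseDenom_pos (hp0 : 0 ≤ p) (hp : p < 1 / 2) (x : ℝ) :
    0 < p ^ 2 + (1 - p) ^ 2 + 2 * p * (1 - p) * cos (2 * π * x) :=
  (pow_pos (by linarith) 2).trans_le (sq_one_sub_two_mul_le_phaseDenom hp0 (by linarith) x)

theorem phaseDeriv_eq_sub (hp0 : 0 ≤ p) (hp : p < 1 / 2) (x : ℝ) :
    phaseDeriv p x = 2 * π * p - 2 * π * p * (1 - p) * (1 - 2 * p) * (1 - cos (2 * π * x)) /
      (p ^ 2 + (1 - p) ^ 2 + 2 * p * (1 - p) * cos (2 * π * x)) := by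
  rw [phaseDeriv, eq_sub_iff_add_eq, ← add_div, div_eq_iff (phaseDenom_pos hp0 hp x).ne']
  ring

theorem phaseDeriv_le (hp0 : 0 ≤ p) (hp : p < 1 / 2) (x : ℝ) : phaseDeriv p x ≤ 2 * π * p := by
  rw [phaseDeriv_eq_sub hp0 hp x, sub_le_self_iff]
  have : 0 ≤ 1 - cos (2 * π * x) := by linarith [cos_le_one (2 * π * x)]
  have : 0 ≤ 1 - 2 * p := by linarith
  have : 0 ≤ 1 - p := by linarith
  exact div_nonneg (by positivity) (phaseDenom_pos hp0 hp x).le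

theorem isLocalMax_phaseDeriv_zero (hp0 : 0 ≤ p) (hp : p < 1 / 2) :
    IsLocalMax (phaseDeriv p) 0 :=
  Filter.Eventually.of_forall fun x => (phaseDeriv_zero p).symm ▸ phaseDeriv_le hp0 hp x

theorem abs_phaseDeriv_sub_le (hp0 : 0 ≤ p) (hp : p ≤ 1 / 10) (x : ℝ) :
    |phaseDeriv p x - 2 * π * p| ≤ 9 / 2 * π ^ 3 * p * x ^ 2 := by
  set D := p ^ 2 + (1 - p) ^ 2 + 2 * p * (1 - p) * cos (2 * π * x)
  have hD0 : 0 < D := phaseDenom_pos hp0 (by linarith) x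
  have hD : (1 - 2 * p) ^ 2 ≤ D := sq_one_sub_two_mul_le_phaseDenom hp0 (by linarith) x
  have hcos : 1 - cos (2 * π * x) ≤ 2 * π ^ 2 * x ^ 2 := by
    nlinarith [one_sub_sq_div_two_le_cos (x := 2 * π * x)]
  have hcos0 : 0 ≤ 1 - cos (2 * π * x) := by linarith [cos_le_one (2 * π * x)]
  -- `p ≤ 1/10` makes `(1 - p)(1 - 2p) ≤ (9/8)(1 - 2p)²`
  have hratio : (1 - p) * (1 - 2 * p) ≤ 9 / 8 * D := by nlinarith
  rw [abs_sub_comm, abs_of_nonneg (sub_nonneg.mpr (phaseDeriv_le hp0 (by linarith) x)),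
    phaseDeriv_eq_sub hp0 (by linarith), sub_sub_cancel, div_le_iff₀ hD0]
  calc 2 * π * p * (1 - p) * (1 - 2 * p) * (1 - cos (2 * π * x))
      = 2 * π * p * ((1 - p) * (1 - 2 * p)) * (1 - cos (2 * π * x)) := by ring
    _ ≤ 2 * π * p * (9 / 8 * D) * (2 * π ^ 2 * x ^ 2) := by gcongr
    _ = 9 / 2 * π ^ 3 * p * x ^ 2 * D := by ring

end BernoulliPhase

open BernoulliPhase in
/-- For `0 < p ≤ 0.1`, the phase function
`f(x) = arctan (p sin (2πx) / (p cos (2πx) + (1−p)))` satisfies `f(0) = 0`,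
`f'(0) = 2πp`, `f''(0) = 0`, and `|f(x) − 2πp x| ≤ 50 p |x|³` for all `x`. -/
theorem bernoulli_phase_taylor (p : ℝ) (hp0 : 0 < p) (hp1 : p ≤ 0.1) :
    let f : ℝ → ℝ := fun x =>
      Real.arctan (p * Real.sin (2 * π * x) / (p * Real.cos (2 * π * x) + (1 - p)))
    f 0 = 0 ∧ deriv f 0 = 2 * π * p ∧ deriv (deriv f) 0 = 0 ∧
      ∀ x : ℝ, |f x - 2 * π * p * x| ≤ 50 * p * |x| ^ 3 := by
  intro f
  have hp : p ≤ 1 / 10 := by norm_num at hp1 ⊢; exact hp1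
  have hp2 : p < 1 / 2 := by linarith
  have hderiv : deriv f = phaseDeriv p := funext fun x => (hasDerivAt_phase hp2 x).deriv
  refine ⟨phase_zero p, by rw [hderiv, phaseDeriv_zero], ?_, fun x => ?_⟩
  · rw [hderiv]
    exact (isLocalMax_phaseDeriv_zero hp0.le hp2).deriv_eq_zero
  have hdev : ∀ t, HasDerivAt (fun t => phase p t - 2 * π * p * t) (phaseDeriv p t - 2 * π * p) t :=
    fun t => ((hasDerivAt_phase hp2 t).sub ((hasDerivAt_id' t).const_mul (2 * π * p))).congr_deriv
      (by rw [mul_one])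
  have hπ : 9 / 2 * π ^ 3 / 3 ≤ 50 := by
    have := pow_le_pow_left₀ pi_pos.le pi_lt_d2.le 3
    norm_num at this ⊢
    linarith
  calc |f x - 2 * π * p * x| ≤ 9 / 2 * π ^ 3 * p / 3 * |x| ^ 3 :=
        abs_le_of_hasDerivAt_of_abs_le_mul_sq hdev (abs_phaseDeriv_sub_le hp0.le hp)
          (by simp [phase_zero]) x
    _ ≤ 50 * p * |x| ^ 3 := by
        rw [mul_div_right_comm]
        gcongr
end
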